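/- arXiv:2303.11231 — 6 statements merged into one kernel-verified Lean document; each statement's English description precedes it below -/
import Mathlib

section
/- A 01*-matrix with at least 2 rows and at least 2 columns is mixed if and only if it contains a corner, i.e., a 2×2 submatrix that is mixed. -/
/-- A 01*-matrix is modelled as a matrix with entries in `Fin 3`,
where `0` stands for `0`, `1` for `1` and `2` for `*`. -/
def MatHorizontal {m n : ℕ} (M : Matrix (Fin m) (Fin n) (Fin 3)) : Prop :=
  ∀ i j j', M i j = M i j'

def MatVertical {m n : ℕ} (M : Matrix (Fin m) (Fin n) (Fin 3)) : Prop :=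
  ∀ i i' j, M i j = M i' j

/-- A matrix (with at least 2 rows and 2 columns) is mixed if it is neither
horizontal nor vertical, or if it contains a `*` entry. -/
def MatMixed {m n : ℕ} (M : Matrix (Fin m) (Fin n) (Fin 3)) : Prop :=
  (¬ MatHorizontal M ∧ ¬ MatVertical M) ∨ (∃ i j, M i j = 2)

lemma pairFin {m : ℕ} (hm : 2 ≤ m) (i : Fin m) :
    ∃ a b : Fin m, a < b ∧ (i = a ∨ i = b) := by
  by_cases h : i.val = 0
  · exact ⟨i, ⟨1, by omega⟩, by simp [Fin.lt_def, h], Or.inl rfl⟩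
  · exact ⟨⟨0, by omega⟩, i, by simp [Fin.lt_def]; omega, Or.inr rfl⟩

/-- A 01*-matrix with at least 2 rows and 2 columns is mixed iff it contains
a corner, i.e. a mixed 2×2 submatrix. -/
theorem matMixed_iff_corner {m n : ℕ} (hm : 2 ≤ m) (hn : 2 ≤ n)
    (M : Matrix (Fin m) (Fin n) (Fin 3)) :
    MatMixed M ↔ ∃ (i₁ i₂ : Fin m) (j₁ j₂ : Fin n), i₁ < i₂ ∧ j₁ < j₂ ∧
      MatMixed (M.submatrix ![i₁, i₂] ![j₁, j₂]) := by
  constructor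
  · intro hmix
    by_contra hcor
    push_neg at hcor
    -- no entry is a star
    have hstar : ∀ i j, M i j ≠ 2 := by
      intro i j h
      obtain ⟨a, b, hab, hia⟩ := pairFin hm i
      obtain ⟨c, d, hcd, hjc⟩ := pairFin hn j
      refine hcor a b c d hab hcd (Or.inr ?_)
      rcases hia with rfl | rfl <;> rcases hjc with rfl | rfl
      · exact ⟨0, 0, by simpa using h⟩
      · exact ⟨0, 1, by simpa using h⟩
      · exact ⟨1, 0, by simpa using h⟩
      · exact ⟨1, 1, by simpa using h⟩
    -- each ordered 2x2 is horizontal or vertical (entrywise)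
    have base : ∀ i i' j j', i < i' → j < j' →
        (M i j = M i j' ∧ M i' j = M i' j') ∨
        (M i j = M i' j ∧ M i j' = M i' j') := by
      intro i i' j j' h1 h2
      have hC := hcor i i' j j' h1 h2
      have hHV : MatHorizontal (M.submatrix ![i, i'] ![j, j']) ∨
          MatVertical (M.submatrix ![i, i'] ![j, j']) := by
        by_contra h
        push_neg at h
        exact hC (Or.inl h)
      rcases hHV with H | V
      · exact Or.inl ⟨by simpa using H 0 0 1, by simpa using H 1 0 1⟩
      · exact Or.inr ⟨by simpa using V 0 1 0, by simpa using V 0 1 1⟩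
    have key : ∀ i i' j j', i ≠ i' → j ≠ j' →
        (M i j = M i j' ∧ M i' j = M i' j') ∨
        (M i j = M i' j ∧ M i j' = M i' j') := by
      intro i i' j j' hi hj
      rcases hi.lt_or_gt with h1 | h1 <;> rcases hj.lt_or_gt with h2 | h2
      · exact base i i' j j' h1 h2
      · exact (base i i' j' j h1 h2).imp
          (fun h => ⟨h.1.symm, h.2.symm⟩) (fun h => ⟨h.2, h.1⟩)
      · exact (base i' i j j' h1 h2).imp
          (fun h => ⟨h.2, h.1⟩) (fun h => ⟨h.1.symm, h.2.symm⟩)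
      · exact (base i' i j' j h1 h2).imp
          (fun h => ⟨h.2.symm, h.1.symm⟩) (fun h => ⟨h.2.symm, h.1.symm⟩)
    rcases hmix with ⟨hH, hV⟩ | ⟨i, j, h⟩
    · -- M not horizontal: get a nonconstant row
      rw [MatHorizontal] at hH
      push_neg at hH
      obtain ⟨r, c, c', hne⟩ := hH
      have hcc' : c ≠ c' := by rintro rfl; exact hne rfl
      -- columns c and c' are constant
      have hconst : ∀ i, M i c = M r c ∧ M i c' = M r c' := by
        intro i
        by_cases hir : i = r
        · subst hir; exact ⟨rfl, rfl⟩
        · rcases key r i c c' (fun h => hir h.symm) hcc' with h | h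
          · exact absurd h.1 hne
          · exact ⟨h.1.symm, h.2.symm⟩
      -- then M is vertical
      apply hV
      intro i i' j
      by_cases hii : i = i'
      · subst hii; rfl
      by_cases hjc : j = c
      · subst hjc; rw [(hconst i).1, (hconst i').1]
      rcases key i i' c j hii (fun h => hjc h.symm) with h | h
      · rw [← h.1, ← h.2, (hconst i).1, (hconst i').1]
      · exact h.2
    · exact hstar i j h
  · rintro ⟨i₁, i₂, j₁, j₂, h1, h2, hmix⟩
    rcases hmix with ⟨hH, hV⟩ | ⟨k, l, hk⟩
    · left
      constructor
      · intro h
        exact hH fun k l l' => by simpa using h (![i₁, i₂] k) (![j₁, j₂] l) (![j₁, j₂] l')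
      · intro h
        exact hV fun k k' l => by simpa using h (![i₁, i₂] k) (![i₁, i₂] k') (![j₁, j₂] l)
    · exact Or.inr ⟨![i₁, i₂] k, ![j₁, j₂] l, by simpa using hk⟩
end

section
/- The n-th shift graph S_{n,2} is triangle-free, and the family of shift graphs has unbounded chromatic number: χ(S_{n,2}) ≥ log₂(n). -/
/-!
Orient each edge of `S_{n,2}` from `(i,j)` to `(j,k)`. In a triangle either the orientation is
cyclic, and the second coordinates would strictly increase all the way round, or some vertex
`(i,j)` has two out-neighbours; these both have first coordinate `j`, so they are not adjacent.
For the chromatic bound, send `i` to the set of colours of the edges `(i,j)`.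
If `i < i'` then the colour of `(i,i')` is in the set of `i` but not in that of `i'`,
since `(i,i')` is adjacent to every `(i',j)`; so this map is injective and `n ≤ 2 ^ c`.
-/
/-- The shift graph `S_{n,2}`: vertices are pairs `(i,j)` with `i < j ≤ n`,
and `(i,j)` is adjacent to `(i',j')` iff `j = i'` or `j' = i`. -/
def shiftGraph (n : ℕ) : SimpleGraph {p : Fin n × Fin n // p.1 < p.2} where
  Adj u v := u.1.2 = v.1.1 ∨ v.1.2 = u.1.1
  symm := ⟨by intro u v h; tauto⟩
  loopless := ⟨by
    rintro ⟨⟨i, j⟩, h⟩ (h' | h') <;> simp_all <;> exact absurd h (by simp [h', lt_irrefl])⟩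

namespace shiftGraph

variable {n : ℕ}

theorem cliqueFree_three : (shiftGraph n).CliqueFree 3 := by
  rintro s hs
  obtain ⟨u, v, w, huv, huw, hvw, -⟩ := SimpleGraph.is3Clique_iff.mp hs
  have hu := u.2
  have hv := v.2
  have hw := w.2
  simp only [shiftGraph, Fin.ext_iff, Fin.lt_def] at huv huw hvw hu hv hw
  omega

variable {α : Type*}

def outColors (C : (shiftGraph n).Coloring α) (i : Fin n) : Set α :=
  {a | ∃ j, ∃ h : i < j, C ⟨(i, j), h⟩ = a}

theorem outColors_injective (C : (shiftGraph n).Coloring α) :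
    Function.Injective (outColors C) := by
  refine .of_lt_imp_ne fun i i' hlt h => ?_
  have hmem : C ⟨(i, i'), hlt⟩ ∈ outColors C i' := h ▸ ⟨i', hlt, rfl⟩
  obtain ⟨j, hj, hcol⟩ := hmem
  have hadj : (shiftGraph n).Adj ⟨(i, i'), hlt⟩ ⟨(i', j), hj⟩ := Or.inl rfl
  exact C.valid hadj hcol.symm

theorem le_two_pow_of_colorable {c : ℕ} (h : (shiftGraph n).Colorable c) : n ≤ 2 ^ c := by
  obtain ⟨C⟩ := h
  simpa using Fintype.card_le_of_injective _ (outColors_injective C)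

end shiftGraph

theorem Real.logb_two_le_of_le_two_pow {n c : ℕ} (h : n ≤ 2 ^ c) : Real.logb 2 n ≤ c := by
  rcases Nat.eq_zero_or_pos n with rfl | hpos
  · simp
  · rw [Real.logb_le_iff_le_rpow one_lt_two (by exact_mod_cast hpos), Real.rpow_natCast]
    exact_mod_cast h

/-- The shift graphs are triangle-free and have chromatic number at least
`log₂ n`: any proper coloring uses at least `log₂ n` colors. -/
theorem shiftGraph_triangleFree_and_chromatic (n : ℕ) :
    (shiftGraph n).CliqueFree 3 ∧
    ∀ c : ℕ, (shiftGraph n).Colorable c → Real.logb 2 n ≤ c :=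
  ⟨shiftGraph.cliqueFree_three, fun _ hc =>
    Real.logb_two_le_of_le_two_pow (shiftGraph.le_two_pow_of_colorable hc)⟩
end

section
/- There exists a function φ(ω, h) satisfying φ(x,1) = φ(1,y) = 1 and φ(ω,h) = φ(ω−1,h)·(φ(ω,h−1)+1)+1 such that: for every class C of ordered graphs not containing some fixed ordered graph H on h vertices, and every ordered graph G with a C-right-module-partition P, the clique number of the quotient satisfies ω(G/P) ≤ φ(ω(G), h). -/
/-- An ordered graph is a graph on `Fin n` with the natural vertex order.
`part : Fin n → Fin k` is a right module partition of `G` if its parts are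
consecutive intervals (`part` is monotone and surjective), each part is an
independent set, and for `i < j` the part `V_i` is a module in `G[V_i ∪ V_j]`. -/
def IsRMP {n k : ℕ} (G : SimpleGraph (Fin n)) (part : Fin n → Fin k) : Prop :=
  Monotone part ∧ Function.Surjective part ∧
  (∀ x y, part x = part y → ¬ G.Adj x y) ∧
  (∀ u u' w, part u = part u' → part u < part w → (G.Adj u w ↔ G.Adj u' w))

/-- `Q` is a transversal minor of `(G, part)`: choose nonempty subsets
`W a ⊆ V_{j a}` for a strictly increasing selection `j` of parts; `Q` records
the existence of edges between the chosen subsets. -/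
def IsTransversalMinor {n k ℓ : ℕ} (G : SimpleGraph (Fin n))
    (part : Fin n → Fin k) (Q : SimpleGraph (Fin ℓ)) : Prop :=
  ∃ (j : Fin ℓ → Fin k) (W : Fin ℓ → Finset (Fin n)),
    StrictMono j ∧ (∀ a, (W a).Nonempty) ∧ (∀ a, ∀ v ∈ W a, part v = j a) ∧
    ∀ a b, Q.Adj a b ↔ a ≠ b ∧ ∃ u ∈ W a, ∃ v ∈ W b, G.Adj u v

/-- `part` is a `C`-right-module-partition of `G` if it is an RMP all of whose
transversal minors belong to `C`. -/
def IsCRMP (C : ∀ m : ℕ, SimpleGraph (Fin m) → Prop) {n k : ℕ}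
    (G : SimpleGraph (Fin n)) (part : Fin n → Fin k) : Prop :=
  IsRMP G part ∧
  ∀ (ℓ : ℕ) (Q : SimpleGraph (Fin ℓ)), IsTransversalMinor G part Q → C ℓ Q

/-- `Q` is the quotient `G/P` : parts are contracted to single vertices, with
an edge `i j` iff some edge of `G` joins `V_i` and `V_j`. -/
def IsQuotient {n k : ℕ} (G : SimpleGraph (Fin n)) (part : Fin n → Fin k)
    (Q : SimpleGraph (Fin k)) : Prop :=
  ∀ i j, Q.Adj i j ↔ i ≠ j ∧ ∃ u v, part u = i ∧ part v = j ∧ G.Adj u v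

/-- The bounding function. -/
def phi : ℕ → ℕ → ℕ
  | 0, _ => 1
  | 1, _ => 1
  | _+2, 0 => 1
  | _+2, 1 => 1
  | x+2, y+2 => phi (x+1) (y+2) * (phi (x+2) (y+1) + 1) + 1

lemma phi_pos (x y : ℕ) : 1 ≤ phi x y := by
  match x, y with
  | 0, _ => simp [phi]
  | 1, _ => simp [phi]
  | _+2, 0 => simp [phi]
  | _+2, 1 => simp [phi]
  | x+2, y+2 => simp [phi]

/-- `H` is realized as a transversal minor using only parts from `S`. -/
def TMinorIn {n k : ℕ} (G : SimpleGraph (Fin n)) (part : Fin n → Fin k)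
    (S : Finset (Fin k)) {h : ℕ} (H : SimpleGraph (Fin h)) : Prop :=
  ∃ (j : Fin h → Fin k) (W : Fin h → Finset (Fin n)),
    StrictMono j ∧ (∀ a, j a ∈ S) ∧ (∀ a, (W a).Nonempty) ∧
    (∀ a, ∀ v ∈ W a, part v = j a) ∧
    ∀ a b, H.Adj a b ↔ a ≠ b ∧ ∃ u ∈ W a, ∃ v ∈ W b, G.Adj u v

lemma TMinorIn.mono {n k : ℕ} {G : SimpleGraph (Fin n)} {part : Fin n → Fin k}
    {S S' : Finset (Fin k)} (hss : S ⊆ S') {h : ℕ} {H : SimpleGraph (Fin h)}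
    (hm : TMinorIn G part S H) : TMinorIn G part S' H := by
  obtain ⟨j, W, h1, h2, h3, h4, h5⟩ := hm
  exact ⟨j, W, h1, fun a => hss (h2 a), h3, h4, h5⟩

lemma main_lem {n k : ℕ} (G : SimpleGraph (Fin n)) (part : Fin n → Fin k)
    (hRMP : IsRMP G part) :
    ∀ (N ω h : ℕ), ω + h ≤ N → 1 ≤ h → ∀ (H : SimpleGraph (Fin h)) (S : Finset (Fin k)),
    (∀ i ∈ S, ∀ j ∈ S, i ≠ j → ∃ u v, part u = i ∧ part v = j ∧ G.Adj u v) →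
    (∀ T : Finset (Fin n), (∀ v ∈ T, part v ∈ S) → G.IsClique (T : Set (Fin n)) →
      T.card ≤ ω) →
    ¬ TMinorIn G part S H → S.card ≤ phi ω h := by
  classical
  obtain ⟨hmono, hsurj, hindep, hmod⟩ := hRMP
  intro N
  induction N with
  | zero => intro ω h hle h1; omega
  | succ N IH =>
    intro ω h hle h1 H S hpair hclq hmin
    by_contra hcard
    push_neg at hcard
    -- hcard : phi ω h < S.card
    have hSpos : 0 < S.card := lt_of_le_of_lt (Nat.zero_le _) hcard
    have hSne : S.Nonempty := Finset.card_pos.mp hSpos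
    set t := S.max' hSne with ht
    have htS : t ∈ S := S.max'_mem hSne
    obtain ⟨vt, hvt⟩ := hsurj t
    -- case ω = 0 : impossible, a single vertex is a clique
    rcases ω with _ | ω'
    · have h10 : ({vt} : Finset (Fin n)).card ≤ 0 := by
        apply hclq
        · intro v hv
          rw [Finset.mem_singleton] at hv
          rw [hv, hvt]; exact htS
        · simp [SimpleGraph.IsClique]
      simp at h10
    -- case h = 1 : realize H as a one-part minor
    rcases h with _ | _ | m
    · omega
    · haveI : Subsingleton (Fin (0+1)) := Fin.subsingleton_one
      refine hmin ⟨fun _ => t, fun _ => Finset.univ.filter (fun v => part v = t),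
        Subsingleton.strictMono _,
        fun _ => htS,
        fun _ => ⟨vt, by simp [hvt]⟩,
        fun a v hv => (Finset.mem_filter.mp hv).2, ?_⟩
      intro a b
      have hab : a = b := Subsingleton.elim a b
      subst hab
      simp
    -- case ω = 1 : any quotient edge gives a 2-clique in G, so |S| ≤ 1
    rcases ω' with _ | ω''
    · have hS1 : S.card ≤ 1 := by
        by_contra hS2
        push_neg at hS2
        obtain ⟨i, hi, j, hj, hij⟩ := Finset.one_lt_card.mp hS2
        obtain ⟨u, v, hu, hv, huv⟩ := hpair i hi j hj hij
        have huvne : u ≠ v := G.ne_of_adj huv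
        have h2 : ({u, v} : Finset (Fin n)).card ≤ 1 := by
          apply hclq
          · intro w hw
            rcases Finset.mem_insert.mp hw with rfl | hw
            · rw [hu]; exact hi
            · rw [Finset.mem_singleton] at hw; rw [hw, hv]; exact hj
          · intro a ha b hb hab
            simp only [Finset.coe_insert, Set.mem_insert_iff, Finset.coe_singleton,
              Set.mem_singleton_iff] at ha hb
            rcases ha with rfl | rfl <;> rcases hb with rfl | rfl
            · exact absurd rfl hab
            · exact huv
            · exact huv.symm
            · exact absurd rfl hab
        rw [Finset.card_insert_of_notMem (by simp [huvne]), Finset.card_singleton] at h2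
        omega
      have hc2 : phi (0+1) (m+1+1) = 1 := by simp [phi]
      omega
    -- main case : ω = ω'' + 2, h = m + 2
    set A := phi (ω''+1) (m+2) with hA
    set B := phi (ω''+2) (m+1) with hB
    have hApos : 1 ≤ A := phi_pos _ _
    have hphieq : phi (ω''+2) (m+2) = A * (B + 1) + 1 := by
      rw [hA, hB]; simp [phi]
    have hcard2 : A * (B + 1) + 1 < S.card := by
      have : phi (ω''+2) (m+2) < S.card := hcard
      omega
    set S₀ := S.erase t with hS₀
    have hS₀lt : ∀ i ∈ S₀, i < t := by
      intro i hi
      exact lt_of_le_of_ne (S.le_max' i (Finset.mem_of_mem_erase hi))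
        (Finset.ne_of_mem_erase hi)
    have hS₀sub : S₀ ⊆ S := Finset.erase_subset _ _
    have hS₀card : A * (B + 1) + 1 ≤ S₀.card := by
      rw [hS₀, Finset.card_erase_of_mem htS]
      omega
    -- the "trace" of a vertex w of part t on S₀
    set c : Fin n → Finset (Fin k) :=
      fun w => S₀.filter (fun i => ∃ u, part u = i ∧ G.Adj u w) with hc
    have hcsub : ∀ w, c w ⊆ S₀ := fun w => Finset.filter_subset _ _
    -- module property : if i ∈ c w then every vertex of part i is adjacent to w
    have hc_all : ∀ w, part w = t → ∀ i ∈ c w, ∀ v, part v = i → G.Adj v w := by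
      intro w hw i hi v hv
      obtain ⟨u, hu, huw⟩ := (Finset.mem_filter.mp hi).2
      have hlt : part u < part w := by
        rw [hu, hw]; exact hS₀lt i (hcsub w hi)
      exact (hmod u v w (by rw [hu, hv]) hlt).mp huw
    -- bound on traces, by induction with ω-1
    have htrace : ∀ w, part w = t → (c w).card ≤ A := by
      intro w hw
      apply IH (ω''+1) (m+2) (by omega) (by omega) H (c w)
      · intro i hi j hj hij
        exact hpair i (hS₀sub (hcsub w hi)) j (hS₀sub (hcsub w hj)) hij
      · intro T hT hTclq
        have hwT : w ∉ T := by
          intro hwT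
          have := hcsub w (hT w hwT)
          rw [hw] at this
          exact Finset.notMem_erase t S this
        have hins : (insert w T).card ≤ ω''+2 := by
          apply hclq
          · intro v hv
            rcases Finset.mem_insert.mp hv with rfl | hv
            · rw [hw]; exact htS
            · exact hS₀sub (hcsub w (hT v hv))
          · rw [Finset.coe_insert]
            apply hTclq.insert
            intro b hb hbw
            exact (hc_all w hw (part b) (hT b hb) b rfl).symm
        rw [Finset.card_insert_of_notMem hwT] at hins
        omega
      · intro hTm
        exact hmin (hTm.mono (fun i hi => hS₀sub (hcsub w hi)))
    -- every element of S₀ is covered by the trace of some vertex of part t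
    have hwit : ∀ i ∈ S₀, ∃ w, part w = t ∧ i ∈ c w := by
      intro i hi
      obtain ⟨u, v, hu, hv, huv⟩ := hpair i (hS₀sub hi) t htS (Finset.ne_of_mem_erase hi)
      exact ⟨v, hv, Finset.mem_filter.mpr ⟨hi, u, hu, huv⟩⟩
    choose f hf1 hf2 using hwit
    -- a cover of minimal cardinality
    have hex : ∃ mm : ℕ, ∃ D : Finset (Fin n),
        ((∀ w ∈ D, part w = t) ∧ ∀ i ∈ S₀, ∃ w ∈ D, i ∈ c w) ∧ D.card = mm := by
      refine ⟨_, S₀.attach.image (fun x => f x.1 x.2), ⟨?_, ?_⟩, rfl⟩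
      · intro w hw
        obtain ⟨x, _, rfl⟩ := Finset.mem_image.mp hw
        exact hf1 x.1 x.2
      · intro i hi
        exact ⟨f i hi, Finset.mem_image.mpr ⟨⟨i, hi⟩, S₀.mem_attach _, rfl⟩, hf2 i hi⟩
    -- take a cover of minimum cardinality
    set m₀ := Nat.find hex with hm₀
    obtain ⟨D₀, hD₀, hD₀card⟩ := Nat.find_spec hex
    -- each member of the minimum cover has a private element
    have hpriv : ∀ w ∈ D₀, ∃ x, x ∈ S₀ ∧ x ∈ c w ∧ ∀ w' ∈ D₀, w' ≠ w → x ∉ c w' := by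
      intro w hw
      have hlt : (D₀.erase w).card < m₀ := by
        rw [hm₀, ← hD₀card]; exact Finset.card_erase_lt_of_mem hw
      have hnot : ¬ ∃ D : Finset (Fin n),
          ((∀ w' ∈ D, part w' = t) ∧ ∀ i ∈ S₀, ∃ w' ∈ D, i ∈ c w') ∧
            D.card = (D₀.erase w).card :=
        Nat.find_min hex hlt
      have hcov : ¬ ∀ i ∈ S₀, ∃ w' ∈ D₀.erase w, i ∈ c w' := by
        intro hcv
        exact hnot ⟨D₀.erase w,
          ⟨fun w' hw' => hD₀.1 w' (Finset.mem_of_mem_erase hw'), hcv⟩, rfl⟩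
      push_neg at hcov
      obtain ⟨x, hxS₀, hxnc⟩ := hcov
      obtain ⟨w'', hw''D, hxw''⟩ := hD₀.2 x hxS₀
      have hw''w : w'' = w := by
        by_contra hne
        exact hxnc w'' (Finset.mem_erase.mpr ⟨hne, hw''D⟩) hxw''
      subst hw''w
      refine ⟨x, hxS₀, hxw'', ?_⟩
      intro w' hw' hne
      exact hxnc w' (Finset.mem_erase.mpr ⟨hne, hw'⟩)
    choose xw hx1 hx2 hx3 using hpriv
    -- the set of private elements
    set K := D₀.attach.image (fun w => xw w.1 w.2) with hK
    have hKS₀ : K ⊆ S₀ := by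
      intro i hi
      obtain ⟨w, _, rfl⟩ := Finset.mem_image.mp hi
      exact hx1 w.1 w.2
    have hKcard : K.card = m₀ := by
      rw [hK, Finset.card_image_of_injOn, Finset.card_attach, hD₀card]
      intro a _ b _ hab
      have hab' : xw a.1 a.2 = xw b.1 b.2 := hab
      by_contra hne
      have hane : a.1 ≠ b.1 := fun h => hne (Subtype.ext h)
      have h9 := hx3 b.1 b.2 a.1 a.2 hane
      rw [← hab'] at h9
      exact h9 (hx2 a.1 a.2)
    -- counting
    have hcount : S₀.card ≤ m₀ * A := by
      have hsub2 : S₀ ⊆ D₀.biUnion c := by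
        intro i hi
        obtain ⟨w, hw, hiw⟩ := hD₀.2 i hi
        exact Finset.mem_biUnion.mpr ⟨w, hw, hiw⟩
      calc S₀.card ≤ (D₀.biUnion c).card := Finset.card_le_card hsub2
        _ ≤ ∑ w ∈ D₀, (c w).card := Finset.card_biUnion_le
        _ ≤ D₀.card • A :=
            Finset.sum_le_card_nsmul _ _ _ (fun w hw => htrace w (hD₀.1 w hw))
        _ = m₀ * A := by rw [smul_eq_mul, hD₀card]
    have hKB : B + 2 ≤ K.card := by
      rw [hKcard]
      by_contra hlt
      push_neg at hlt
      have h11 : m₀ * A ≤ (B + 1) * A := by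
        gcongr
        omega
      rw [Nat.mul_comm (B+1) A] at h11
      omega
    obtain ⟨x₀, hx₀K⟩ : K.Nonempty := Finset.card_pos.mp (by omega)
    set K' := K.erase x₀ with hK'
    have hK'K : K' ⊆ K := Finset.erase_subset _ _
    have hK'card : B + 1 ≤ K'.card := by
      rw [hK', Finset.card_erase_of_mem hx₀K]; omega
    -- recursion at h-1 inside K'
    set H' := H.comap (Fin.castSucc : Fin (m+1) → Fin (m+2)) with hH'
    have hTm : TMinorIn G part K' H' := by
      by_contra hno
      have h12 := IH (ω''+2) (m+1) (by omega) (by omega) H' K'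
        (fun i hi j hj hij =>
          hpair i (hS₀sub (hKS₀ (hK'K hi))) j (hS₀sub (hKS₀ (hK'K hj))) hij)
        (fun T hT hTclq => hclq T (fun v hv => hS₀sub (hKS₀ (hK'K (hT v hv)))) hTclq)
        hno
      omega
    obtain ⟨jj, WW, hjmono, hjmem, hWne, hWpart, hadjW⟩ := hTm
    -- witness selector for elements of K
    have hwitK : ∀ i, i ∈ K → ∃ w, ∃ hw : w ∈ D₀, xw w hw = i := by
      intro i hi
      obtain ⟨w, _, hwi⟩ := Finset.mem_image.mp hi
      exact ⟨w.1, w.2, hwi⟩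
    choose wit hwitD hwitx using hwitK
    have hwit_part : ∀ i hi, part (wit i hi) = t := fun i hi => hD₀.1 _ (hwitD i hi)
    have hwit_hit : ∀ i hi, i ∈ c (wit i hi) := by
      intro i hi
      have h13 := hx2 (wit i hi) (hwitD i hi)
      rw [hwitx i hi] at h13
      exact h13
    have hKunique : ∀ w (hw : w ∈ D₀), ∀ y, ∀ hy : y ∈ K, y ∈ c w → y = xw w hw := by
      intro w hw y hy hyc
      rcases eq_or_ne (wit y hy) w with heq | hne2
      · subst heq
        exact (hwitx y hy).symm
      · exfalso
        have h22 := hx3 (wit y hy) (hwitD y hy) w hw (fun h => hne2 h.symm)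
        rw [hwitx y hy] at h22
        exact h22 hyc
    have hwit_priv : ∀ i hi, ∀ i' ∈ K, i' ≠ i → i' ∉ c (wit i hi) := by
      intro i hi i' hi' hne hmem
      have h23 := hKunique (wit i hi) (hwitD i hi) i' hi' hmem
      rw [hwitx i hi] at h23
      exact hne h23
    -- the neighborhood of the last vertex of H among the first m+1 vertices
    set Nbr : Finset (Fin (m+1)) :=
      Finset.univ.filter (fun a => H.Adj (Fin.castSucc a) (Fin.last (m+1))) with hNbr
    have hjK : ∀ a, jj a ∈ K := fun a => hK'K (hjmem a)
    set Wt : Finset (Fin n) :=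
      insert (wit x₀ hx₀K) (Nbr.image (fun a => wit (jj a) (hjK a))) with hWt
    have hWt_part : ∀ v ∈ Wt, part v = t := by
      intro v hv
      rcases Finset.mem_insert.mp hv with rfl | hv2
      · exact hwit_part _ _
      · obtain ⟨a, _, rfl⟩ := Finset.mem_image.mp hv2
        exact hwit_part _ _
    -- key adjacency characterization between a selected part and Wt
    have hkey : ∀ a' : Fin (m+1), (∃ u ∈ WW a', ∃ v ∈ Wt, G.Adj u v) ↔ a' ∈ Nbr := by
      intro a'
      constructor
      · rintro ⟨u, hu, v, hv, huv⟩
        have hjj_in_c : ∀ (y : Fin k) (hy : y ∈ K), v = wit y hy → jj a' ∈ c (wit y hy) := by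
          intro y hy hveq
          refine Finset.mem_filter.mpr ⟨hKS₀ (hjK a'), ?_⟩
          exact ⟨u, hWpart a' u hu, hveq ▸ huv⟩
        rcases Finset.mem_insert.mp hv with hveq | hv2
        · exfalso
          have h6 := hjj_in_c x₀ hx₀K hveq
          have hne : jj a' ≠ x₀ := Finset.ne_of_mem_erase (hjmem a')
          exact hwit_priv x₀ hx₀K (jj a') (hjK a') hne h6
        · obtain ⟨a₂, ha₂, hveq⟩ := Finset.mem_image.mp hv2
          have h6 := hjj_in_c (jj a₂) (hjK a₂) hveq.symm
          have h15 : jj a' = jj a₂ := by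
            by_contra hne
            exact hwit_priv (jj a₂) (hjK a₂) (jj a') (hjK a') hne h6
          have h16 : a' = a₂ := hjmono.injective h15
          rw [h16]; exact ha₂
      · intro ha'
        obtain ⟨u, hu⟩ := hWne a'
        refine ⟨u, hu, wit (jj a') (hjK a'), ?_, ?_⟩
        · exact Finset.mem_insert_of_mem (Finset.mem_image.mpr ⟨a', ha', rfl⟩)
        · exact hc_all (wit (jj a') (hjK a')) (hwit_part _ _) (jj a')
            (hwit_hit (jj a') (hjK a')) u (hWpart a' u hu)
    -- assemble the transversal minor realizing H, contradiction
    apply hmin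
    refine ⟨Fin.snoc jj t, Fin.snoc WW Wt, ?_, ?_, ?_, ?_, ?_⟩
    · -- strict monotonicity
      intro a b hab
      rcases eq_or_ne b (Fin.last (m+1)) with rfl | hbl
      · have hal : a ≠ Fin.last (m+1) := ne_of_lt hab
        obtain ⟨a', rfl⟩ := Fin.exists_castSucc_eq.mpr hal
        rw [Fin.snoc_castSucc, Fin.snoc_last]
        exact hS₀lt _ (hKS₀ (hK'K (hjmem a')))
      · obtain ⟨b', rfl⟩ := Fin.exists_castSucc_eq.mpr hbl
        have hal : a ≠ Fin.last (m+1) :=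
          ne_of_lt (lt_trans hab (Fin.castSucc_lt_last b'))
        obtain ⟨a', rfl⟩ := Fin.exists_castSucc_eq.mpr hal
        rw [Fin.snoc_castSucc, Fin.snoc_castSucc]
        exact hjmono (Fin.castSucc_lt_castSucc_iff.mp hab)
    · -- selected parts lie in S
      intro a
      rcases eq_or_ne a (Fin.last (m+1)) with rfl | hal
      · rw [Fin.snoc_last]; exact htS
      · obtain ⟨a', rfl⟩ := Fin.exists_castSucc_eq.mpr hal
        rw [Fin.snoc_castSucc]
        exact hS₀sub (hKS₀ (hK'K (hjmem a')))
    · -- nonemptiness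
      intro a
      rcases eq_or_ne a (Fin.last (m+1)) with rfl | hal
      · rw [Fin.snoc_last]; exact Finset.insert_nonempty _ _
      · obtain ⟨a', rfl⟩ := Fin.exists_castSucc_eq.mpr hal
        rw [Fin.snoc_castSucc]
        exact hWne a'
    · -- parts
      intro a v hv
      rcases eq_or_ne a (Fin.last (m+1)) with rfl | hal
      · rw [Fin.snoc_last] at hv ⊢
        exact hWt_part v hv
      · obtain ⟨a', rfl⟩ := Fin.exists_castSucc_eq.mpr hal
        rw [Fin.snoc_castSucc] at hv ⊢
        exact hWpart a' v hv
    · -- adjacency pattern equals H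
      intro a b
      rcases eq_or_ne a (Fin.last (m+1)) with rfl | hal
      · rcases eq_or_ne b (Fin.last (m+1)) with rfl | hbl
        · simp only [Fin.snoc_last]
          constructor
          · intro h17; exact absurd h17 (H.irrefl)
          · rintro ⟨hne, -⟩; exact absurd rfl hne
        · obtain ⟨b', rfl⟩ := Fin.exists_castSucc_eq.mpr hbl
          rw [Fin.snoc_castSucc, Fin.snoc_last]
          rw [H.adj_comm]
          constructor
          · intro h17
            have hb'N : b' ∈ Nbr := Finset.mem_filter.mpr ⟨Finset.mem_univ _, h17⟩
            obtain ⟨u, hu, v, hv, huv⟩ := (hkey b').mpr hb'N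
            exact ⟨(Fin.castSucc_lt_last b').ne', v, hv, u, hu, huv.symm⟩
          · rintro ⟨hne, u, hu, v, hv, huv⟩
            have h18 : b' ∈ Nbr := (hkey b').mp ⟨v, hv, u, hu, huv.symm⟩
            exact (Finset.mem_filter.mp h18).2
      · obtain ⟨a', rfl⟩ := Fin.exists_castSucc_eq.mpr hal
        rcases eq_or_ne b (Fin.last (m+1)) with rfl | hbl
        · rw [Fin.snoc_castSucc, Fin.snoc_last]
          constructor
          · intro h17
            have ha'N : a' ∈ Nbr := Finset.mem_filter.mpr ⟨Finset.mem_univ _, h17⟩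
            obtain ⟨u, hu, v, hv, huv⟩ := (hkey a').mpr ha'N
            exact ⟨(Fin.castSucc_lt_last a').ne, u, hu, v, hv, huv⟩
          · rintro ⟨hne, u, hu, v, hv, huv⟩
            exact (Finset.mem_filter.mp ((hkey a').mp ⟨u, hu, v, hv, huv⟩)).2
        · obtain ⟨b', rfl⟩ := Fin.exists_castSucc_eq.mpr hbl
          rw [Fin.snoc_castSucc, Fin.snoc_castSucc]
          have h19 := hadjW a' b'
          constructor
          · intro h17
            obtain ⟨hne, rest⟩ := h19.mp h17
            exact ⟨fun hcc => hne (Fin.castSucc_inj.mp hcc), rest⟩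
          · rintro ⟨hne, rest⟩
            exact h19.mpr ⟨fun h20 => hne (by rw [h20]), rest⟩


/-- There is a function `φ` with `φ(x,1) = φ(1,y) = 1` and
`φ(ω,h) = φ(ω−1,h)·(φ(ω,h−1)+1)+1` such that for every hereditary class `C` of
ordered graphs missing some ordered graph `H` on `h` vertices, and every
ordered graph `G` with a `C`-right-module-partition `P`, the clique number of
the quotient satisfies `ω(G/P) ≤ φ(ω(G), h)`. -/
theorem cliqueNum_quotient_le_phi :
    ∃ φ : ℕ → ℕ → ℕ,
      (∀ x, 1 ≤ x → φ x 1 = 1) ∧ (∀ y, 1 ≤ y → φ 1 y = 1) ∧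
      (∀ w h, 2 ≤ w → 2 ≤ h → φ w h = φ (w - 1) h * (φ w (h - 1) + 1) + 1) ∧
      ∀ (C : ∀ m : ℕ, SimpleGraph (Fin m) → Prop),
        (∀ (m l : ℕ) (f : Fin l → Fin m), StrictMono f →
          ∀ H : SimpleGraph (Fin m), C m H → C l (H.comap f)) →
        ∀ (h : ℕ), 1 ≤ h → ∀ (H : SimpleGraph (Fin h)), ¬ C h H →
        ∀ (n k : ℕ) (G : SimpleGraph (Fin n)) (part : Fin n → Fin k),
          IsCRMP C G part →
          ∀ Q : SimpleGraph (Fin k), IsQuotient G part Q →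
            Q.cliqueNum ≤ φ G.cliqueNum h := by
  classical
  refine ⟨phi, ?_, ?_, ?_, ?_⟩
  · intro x hx
    rcases x with _ | _ | x
    · omega
    · simp [phi]
    · simp [phi]
  · intro y _
    simp [phi]
  · intro w h hw hh
    rcases w with _ | _ | w
    · omega
    · omega
    · rcases h with _ | _ | h
      · omega
      · omega
      · show phi (w+2) (h+2) = phi (w+1) (h+2) * (phi (w+2) (h+1) + 1) + 1
        simp [phi]
  · intro C hC h hh H hH n k G part hCRMP Q hQ
    obtain ⟨hRMP, hmins⟩ := hCRMP
    have hnot : ¬ TMinorIn G part Finset.univ H := by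
      rintro ⟨j, W, h1, h2, h3, h4, h5⟩
      exact hH (hmins h H ⟨j, W, h1, h3, h4, h5⟩)
    rw [SimpleGraph.cliqueNum]
    refine csSup_le ⟨0, ∅, SimpleGraph.isNClique_empty.mpr rfl⟩ ?_
    rintro m ⟨s, hs⟩
    have hcard : s.card = m := hs.2
    rw [← hcard]
    apply main_lem G part hRMP (G.cliqueNum + h) G.cliqueNum h (le_refl _) hh H s
    · intro i hi j hj hij
      have hadj : Q.Adj i j := hs.1 (Finset.mem_coe.mpr hi) (Finset.mem_coe.mpr hj) hij
      obtain ⟨-, u, v, hu, hv, huv⟩ := (hQ i j).mp hadj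
      exact ⟨u, v, hu, hv, huv⟩
    · intro T _ hTclq
      exact SimpleGraph.IsClique.card_le_cliqueNum (tc := hTclq)
    · intro hTm
      exact hnot (hTm.mono (Finset.subset_univ s))
end

section
/- If the class C of ordered graphs is χ-bounded and does not contain some ordered graph on h vertices, then the right extension RM(C) is χ-bounded: if every H ∈ C satisfies χ(H) ≤ f(ω(H)), then every G ∈ RM(C) satisfies χ(G) ≤ f(φ(ω(G), h)) where φ is the function with φ(x,1)=φ(1,y)=1 and φ(ω,h)=φ(ω−1,h)·(φ(ω,h−1)+1)+1. -/
/-!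
The quotient `G/P` is the transversal minor that takes every part whole, so it lies in `C` and is
`f(ω(G/P))`-colourable; since the parts are independent, colouring each vertex by the colour of
its part colours `G`. It remains to show `ω(G/P) ≤ φ(ω(G), h)`: the parts of a clique `S` of
`G/P` with more than `φ(ω, h)` elements realize every ordered graph `H` on `h` vertices as a
transversal minor, the forbidden one included. By right modularity, a vertex adjacent to some
vertex of an earlier part is complete to it. Induct on `ω + h`. Either some vertex `v` is complete
to more than `φ(ω - 1, h)` earlier parts of `S`, and these carry cliques of size at most `ω - 1`
(add `v`); or each vertex is complete to at most `p = φ(ω - 1, h)` of them, and a minimal set of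
vertices of the last part of `S` covering the other parts of `S` gives, through private parts, an
induced matching `a ↦ w_a` onto at least `φ(ω, h - 1) + 2` earlier parts. Then `H` minus its last
vertex is realized on all but one matched part `a₀`, and its last vertex by the bag of the `w_a`
for its neighbours together with `w_{a₀}`, which keeps the bag nonempty without creating edges.
-/

open Finset

/-- The function `φ` of the statement, set to `1` when an argument is `0`. -/
def rightExtensionBound : ℕ → ℕ → ℕ
  | w + 2, h + 2 =>
    rightExtensionBound (w + 1) (h + 2) * (rightExtensionBound (w + 2) (h + 1) + 1) + 1
  | _, _ => 1

theorem one_le_rightExtensionBound (w h : ℕ) : 1 ≤ rightExtensionBound w h := by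
  unfold rightExtensionBound; split <;> omega

theorem rightExtensionBound_one_right (w : ℕ) : rightExtensionBound w 1 = 1 := by
  unfold rightExtensionBound; split <;> simp_all

theorem rightExtensionBound_one_left (h : ℕ) : rightExtensionBound 1 h = 1 := by
  unfold rightExtensionBound; rfl

theorem rightExtensionBound_eq {w h : ℕ} (hw : 2 ≤ w) (hh : 2 ≤ h) :
    rightExtensionBound w h =
      rightExtensionBound (w - 1) h * (rightExtensionBound w (h - 1) + 1) + 1 := by
  obtain ⟨w, rfl⟩ := Nat.exists_eq_add_of_le' hw
  obtain ⟨h, rfl⟩ := Nat.exists_eq_add_of_le' hh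
  rw [rightExtensionBound]
  rfl

theorem Finset.exists_subset_biUnion_forall_exists_private {α β : Type*} [DecidableEq α]
    [DecidableEq β] {T : Finset β} {N : β → Finset α} {M : Finset α}
    (hM : M ⊆ T.biUnion N) :
    ∃ U ⊆ T, M ⊆ U.biUnion N ∧ ∀ v ∈ U, ∃ a ∈ M, a ∈ N v ∧ ∀ v' ∈ U, a ∈ N v' → v' = v := by
  obtain ⟨U, hU, hmin⟩ := exists_min_image {U ∈ T.powerset | M ⊆ U.biUnion N} card
    ⟨T, mem_filter.2 ⟨mem_powerset_self T, hM⟩⟩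
  rw [mem_filter, mem_powerset] at hU
  refine ⟨U, hU.1, hU.2, fun v hv => ?_⟩
  by_contra! hshared
  have hcover : M ⊆ (U.erase v).biUnion N := fun a ha => by
    obtain ⟨w, hw, haw⟩ := mem_biUnion.1 (hU.2 ha)
    by_cases hwv : w = v
    · subst hwv
      obtain ⟨w', hw', haw', hne⟩ := hshared a ha haw
      exact mem_biUnion.2 ⟨w', mem_erase.2 ⟨hne, hw'⟩, haw'⟩
    · exact mem_biUnion.2 ⟨w, mem_erase.2 ⟨hwv, hw⟩, haw⟩
  have := hmin (U.erase v) (mem_filter.2 ⟨mem_powerset.2 ((erase_subset v U).trans hU.1), hcover⟩)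
  rw [card_erase_of_mem hv] at this
  have := card_pos.2 ⟨v, hv⟩
  omega

theorem Finset.exists_induced_matching_of_subset_biUnion {α β : Type*} [Nonempty α] [Nonempty β]
    [DecidableEq α] [DecidableEq β] {T : Finset β} {N : β → Finset α} {M : Finset α}
    (hM : M ⊆ T.biUnion N) {p : ℕ} (hp : ∀ v ∈ T, #(N v) ≤ p) :
    ∃ S ⊆ M, ∃ wit : α → β, (∀ a ∈ S, wit a ∈ T) ∧
      (∀ a ∈ S, ∀ b ∈ S, b ∈ N (wit a) ↔ b = a) ∧ #M ≤ #S * p := by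
  obtain ⟨U, hUT, hMU, hpriv⟩ := exists_subset_biUnion_forall_exists_private hM
  choose! prv hprvM hprvN hprv using hpriv
  have hinj : Set.InjOn prv U := fun v hv v' hv' he => hprv v' hv' v hv (he ▸ hprvN v hv)
  have hwit : ∀ a ∈ U.image prv, ∃ v ∈ U, prv v = a := fun a ha => mem_image.1 ha
  choose! wit hwitU hprv_wit using hwit
  refine ⟨U.image prv, fun a ha => ?_, wit, fun a ha => hUT (hwitU a ha), ?_, ?_⟩
  · obtain ⟨v, hv, rfl⟩ := mem_image.1 ha
    exact hprvM v hv
  · intro a ha b hb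
    constructor
    · intro hab
      rw [← hprv_wit b hb, ← hprv_wit a ha,
        hprv (wit b) (hwitU b hb) (wit a) (hwitU a ha) (by rwa [hprv_wit b hb])]
    · rintro rfl
      simpa [hprv_wit b hb] using hprvN (wit b) (hwitU b hb)
  · calc #M ≤ #(U.biUnion N) := card_le_card hMU
      _ ≤ #U * p := card_biUnion_le_card_mul U N p fun v hv => hp v (hUT hv)
      _ = #(U.image prv) * p := by rw [card_image_of_injOn hinj]

section

open scoped Classical

variable {n k : ℕ} {G : SimpleGraph (Fin n)} {part : Fin n → Fin k}

def IsRightModular (G : SimpleGraph (Fin n)) (part : Fin n → Fin k) : Prop :=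
  ∀ u u' w, part u = part u' → part u < part w → (G.Adj u w ↔ G.Adj u' w)

def IsCompleteToPart (G : SimpleGraph (Fin n)) (part : Fin n → Fin k) (v : Fin n) (i : Fin k) :
    Prop :=
  ∀ u, part u = i → G.Adj u v

theorem IsRightModular.isCompleteToPart_of_adj (hmod : IsRightModular G part) {u v : Fin n}
    (hlt : part u < part v) (huv : G.Adj u v) : IsCompleteToPart G part v (part u) :=
  fun u' hu' => (hmod u' u v hu' (hu' ▸ hlt)).2 huv

theorem IsRightModular.exists_adj_iff (hmod : IsRightModular G part) {A : Finset (Fin n)}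
    (hA : A.Nonempty) {i : Fin k} (hAi : ∀ u ∈ A, part u = i) {v : Fin n} (hlt : i < part v) :
    (∃ u ∈ A, G.Adj u v) ↔ IsCompleteToPart G part v i := by
  constructor
  · rintro ⟨u, hu, huv⟩
    exact hAi u hu ▸ hmod.isCompleteToPart_of_adj (hAi u hu ▸ hlt) huv
  · intro hv
    obtain ⟨u, hu⟩ := hA
    exact ⟨u, hu, hv u (hAi u hu)⟩

def quotientGraph (G : SimpleGraph (Fin n)) (part : Fin n → Fin k) : SimpleGraph (Fin k) where
  Adj i j := i ≠ j ∧ ∃ u v, part u = i ∧ part v = j ∧ G.Adj u v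
  symm := ⟨fun _ _ ⟨hne, u, v, hu, hv, huv⟩ => ⟨hne.symm, v, u, hv, hu, huv.symm⟩⟩
  loopless := ⟨fun _ h => h.1 rfl⟩

def quotientHom (hind : ∀ x y, part x = part y → ¬G.Adj x y) : G →g quotientGraph G part where
  toFun := part
  map_rel' {u v} huv := ⟨fun he => hind u v he huv, u, v, rfl, rfl, huv⟩

theorem quotientGraph_isTransversalMinor (hsurj : Function.Surjective part) :
    IsTransversalMinor G part (quotientGraph G part) := by
  refine ⟨id, fun i => {v | part v = i}, strictMono_id, fun i => ?_, fun i v hv => ?_,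
    fun i j => ?_⟩
  · obtain ⟨v, hv⟩ := hsurj i
    exact ⟨v, by simpa using hv⟩
  · simpa using hv
  · simp [quotientGraph]

theorem exists_adj_of_isClique_quotientGraph {S : Finset (Fin k)}
    (hS : (quotientGraph G part).IsClique (S : Set (Fin k))) (hcard : 1 < #S) :
    ∃ u v, part u ∈ S ∧ part v ∈ S ∧ G.Adj u v := by
  obtain ⟨i, hi, j, hj, hij⟩ := one_lt_card.1 hcard
  obtain ⟨-, u, v, rfl, rfl, huv⟩ := hS hi hj hij
  exact ⟨u, v, hi, hj, huv⟩

def CliqueBoundedOn (G : SimpleGraph (Fin n)) (part : Fin n → Fin k) (S : Finset (Fin k))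
    (ω : ℕ) : Prop :=
  ∀ t : Finset (Fin n), G.IsClique (t : Set (Fin n)) → (∀ x ∈ t, part x ∈ S) → #t ≤ ω

theorem CliqueBoundedOn.mono {S T : Finset (Fin k)} {ω : ℕ} (hT : CliqueBoundedOn G part T ω)
    (hST : S ⊆ T) : CliqueBoundedOn G part S ω :=
  fun t ht htS => hT t ht fun x hx => hST (htS x hx)

theorem CliqueBoundedOn.two_le {S : Finset (Fin k)} {ω : ℕ} (hω : CliqueBoundedOn G part S ω)
    {u v : Fin n} (hu : part u ∈ S) (hv : part v ∈ S) (huv : G.Adj u v) : 2 ≤ ω := by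
  have := hω {u, v} (by simpa [SimpleGraph.isClique_pair] using fun _ => huv) (by simp [hu, hv])
  rwa [card_pair huv.ne] at this

theorem CliqueBoundedOn.filter_isCompleteToPart {S : Finset (Fin k)} {ω : ℕ}
    (hω : CliqueBoundedOn G part S (ω + 1)) {v : Fin n} (hv : part v ∈ S) :
    CliqueBoundedOn G part {a ∈ S | a < part v ∧ IsCompleteToPart G part v a} ω := by
  intro t ht htS
  have hvt : v ∉ t := fun hvt => lt_irrefl _ (mem_filter.1 (htS v hvt)).2.1
  have hclique : G.IsClique (insert v t : Finset (Fin n)) := by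
    rw [coe_insert, SimpleGraph.isClique_insert]
    exact ⟨ht, fun x hx _ => ((mem_filter.1 (htS x hx)).2.2 x rfl).symm⟩
  have := hω _ hclique fun x hx => by
    rcases mem_insert.1 hx with rfl | hx
    exacts [hv, (mem_filter.1 (htS x hx)).1]
  rw [card_insert_of_notMem hvt] at this
  omega

structure IsTransversalModel {ℓ : ℕ} (G : SimpleGraph (Fin n)) (part : Fin n → Fin k)
    (H : SimpleGraph (Fin ℓ)) (j : Fin ℓ → Fin k) (W : Fin ℓ → Finset (Fin n)) : Prop where
  strictMono : StrictMono j
  nonempty : ∀ a, (W a).Nonempty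
  part_eq : ∀ a, ∀ v ∈ W a, part v = j a
  adj_iff : ∀ a b, H.Adj a b ↔ a ≠ b ∧ ∃ u ∈ W a, ∃ v ∈ W b, G.Adj u v

theorem IsTransversalModel.isTransversalMinor {ℓ : ℕ} {H : SimpleGraph (Fin ℓ)}
    {j : Fin ℓ → Fin k} {W : Fin ℓ → Finset (Fin n)} (hM : IsTransversalModel G part H j W) :
    IsTransversalMinor G part H :=
  ⟨j, W, hM.strictMono, hM.nonempty, hM.part_eq, hM.adj_iff⟩

theorem IsTransversalModel.snoc (hmod : IsRightModular G part) {m : ℕ}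
    {H : SimpleGraph (Fin (m + 1))} {j : Fin m → Fin k} {W : Fin m → Finset (Fin n)}
    (hM : IsTransversalModel G part (H.comap Fin.castSucc) j W) {i : Fin k} (hj : ∀ a, j a < i)
    {W' : Finset (Fin n)} (hW' : W'.Nonempty) (hW'i : ∀ v ∈ W', part v = i)
    (htrace : ∀ a, H.Adj a.castSucc (Fin.last m) ↔ ∃ v ∈ W', IsCompleteToPart G part v (j a)) :
    IsTransversalModel G part H (Fin.snoc j i) (Fin.snoc W W') := by
  have hlast : ∀ a, H.Adj a.castSucc (Fin.last m) ↔ ∃ u ∈ W a, ∃ v ∈ W', G.Adj u v := by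
    intro a
    have hcomplete : ∀ v ∈ W', (∃ u ∈ W a, G.Adj u v) ↔ IsCompleteToPart G part v (j a) :=
      fun v hv => hmod.exists_adj_iff (hM.nonempty a) (hM.part_eq a) (hW'i v hv ▸ hj a)
    rw [htrace]
    constructor
    · rintro ⟨v, hv, hvc⟩
      obtain ⟨u, hu, huv⟩ := (hcomplete v hv).2 hvc
      exact ⟨u, hu, v, hv, huv⟩
    · rintro ⟨u, hu, v, hv, huv⟩
      exact ⟨v, hv, (hcomplete v hv).1 ⟨u, hu, huv⟩⟩
  refine ⟨fun a b hab => ?_, fun a => ?_, fun a => ?_, fun a b => ?_⟩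
  · induction b using Fin.lastCases with
    | last =>
      induction a using Fin.lastCases with
      | last => exact absurd hab (lt_irrefl _)
      | cast a => simpa using hj a
    | cast b =>
      induction a using Fin.lastCases with
      | last => exact absurd hab (not_lt.2 (Fin.castSucc_lt_last b).le)
      | cast a => simpa using hM.strictMono (Fin.castSucc_lt_castSucc_iff.1 hab)
  · induction a using Fin.lastCases with
    | last => simpa using hW'
    | cast a => simpa using hM.nonempty a
  · induction a using Fin.lastCases with
    | last => simpa using hW'i
    | cast a => simpa using hM.part_eq a
  · induction a using Fin.lastCases with
    | last =>
      induction b using Fin.lastCases with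
      | last => simp
      | cast b =>
        rw [H.adj_comm, hlast b]
        simp only [Fin.snoc_last, Fin.snoc_castSucc, ne_eq, (Fin.castSucc_lt_last b).ne',
          not_false_eq_true, true_and]
        exact ⟨fun ⟨u, hu, v, hv, huv⟩ => ⟨v, hv, u, hu, huv.symm⟩,
          fun ⟨v, hv, u, hu, huv⟩ => ⟨u, hu, v, hv, huv.symm⟩⟩
    | cast a =>
      induction b using Fin.lastCases with
      | last => simpa [(Fin.castSucc_lt_last a).ne] using hlast a
      | cast b => simpa using hM.adj_iff a b

def IsTransversalMinorWithin {ℓ : ℕ} (G : SimpleGraph (Fin n)) (part : Fin n → Fin k)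
    (S : Finset (Fin k)) (H : SimpleGraph (Fin ℓ)) : Prop :=
  ∃ j W, IsTransversalModel G part H j W ∧ ∀ a, j a ∈ S

theorem IsTransversalMinorWithin.mono {ℓ : ℕ} {H : SimpleGraph (Fin ℓ)} {S T : Finset (Fin k)}
    (hS : IsTransversalMinorWithin G part S H) (hST : S ⊆ T) :
    IsTransversalMinorWithin G part T H :=
  let ⟨j, W, hM, hjS⟩ := hS
  ⟨j, W, hM, fun a => hST (hjS a)⟩

theorem IsTransversalMinorWithin.snoc_of_matching (hmod : IsRightModular G part)
    {S S' : Finset (Fin k)} {i : Fin k} (hi : i ∈ S) (hS'S : S' ⊆ S) (hS'i : ∀ a ∈ S', a < i)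
    {wit : Fin k → Fin n} (hwit : ∀ a ∈ S', part (wit a) = i)
    (hmatch : ∀ a ∈ S', ∀ b ∈ S', IsCompleteToPart G part (wit a) b ↔ b = a)
    {a₀ : Fin k} (ha₀ : a₀ ∈ S') {m : ℕ} {H : SimpleGraph (Fin (m + 1))}
    (hH : IsTransversalMinorWithin G part (S'.erase a₀) (H.comap Fin.castSucc)) :
    IsTransversalMinorWithin G part S H := by
  obtain ⟨j, W, hM, hjS'⟩ := hH
  have hj : ∀ a, j a ∈ S' := fun a => mem_of_mem_erase (hjS' a)
  set X : Finset (Fin m) := {c | H.Adj c.castSucc (Fin.last m)}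
  refine ⟨Fin.snoc j i, Fin.snoc W (insert (wit a₀) (X.image (wit ∘ j))),
    hM.snoc hmod (fun a => hS'i _ (hj a)) (insert_nonempty _ _) (fun v hv => ?_) (fun a => ?_),
    fun a => ?_⟩
  · rcases mem_insert.1 hv with rfl | hv
    · exact hwit a₀ ha₀
    · obtain ⟨c, -, rfl⟩ := mem_image.1 hv
      exact hwit _ (hj c)
  · have hwitj : ∀ c, IsCompleteToPart G part (wit (j c)) (j a) ↔ a = c := fun c =>
      (hmatch _ (hj c) _ (hj a)).trans hM.strictMono.injective.eq_iff
    rw [exists_mem_insert, exists_mem_image, hmatch a₀ ha₀ (j a) (hj a)]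
    simp [ne_of_mem_erase (hjS' a), hwitj, X]
  · induction a using Fin.lastCases with
    | last => simpa using hi
    | cast a => simpa using hS'S (hj a)

theorem exists_matching_into_max_part (hmod : IsRightModular G part) {S : Finset (Fin k)}
    (hS : (quotientGraph G part).IsClique (S : Set (Fin k))) {p q : ℕ}
    (hdeg : ∀ v, part v ∈ S → #{a ∈ S | a < part v ∧ IsCompleteToPart G part v a} ≤ p)
    (hcard : p * (q + 1) + 1 < #S) :
    ∃ i ∈ S, ∃ S' ⊆ S, (∀ a ∈ S', a < i) ∧ q + 2 ≤ #S' ∧ ∃ wit : Fin k → Fin n,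
      (∀ a ∈ S', part (wit a) = i) ∧
      ∀ a ∈ S', ∀ b ∈ S', IsCompleteToPart G part (wit a) b ↔ b = a := by
  have hSne : S.Nonempty := card_pos.1 (by omega)
  obtain ⟨u₀, -⟩ := exists_adj_of_isClique_quotientGraph hS (by omega)
  have : Nonempty (Fin n) := ⟨u₀⟩
  have : Nonempty (Fin k) := ⟨part u₀⟩
  set i := S.max' hSne
  have hi : i ∈ S := max'_mem S hSne
  set M := S.erase i
  have hM_lt : ∀ a ∈ M, a < i := fun a ha => lt_max'_of_mem_erase_max' S hSne ha
  have hcover : M ⊆ ({v | part v = i} : Finset (Fin n)).biUnion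
      fun v => {a ∈ M | IsCompleteToPart G part v a} := by
    intro a ha
    obtain ⟨-, u, v, rfl, hv, huv⟩ := hS (mem_of_mem_erase ha) hi (ne_of_mem_erase ha)
    exact mem_biUnion.2 ⟨v, by simpa using hv,
      mem_filter.2 ⟨ha, hmod.isCompleteToPart_of_adj (hv ▸ hM_lt _ ha) huv⟩⟩
  have hsmall : ∀ v ∈ ({v | part v = i} : Finset (Fin n)),
      #{a ∈ M | IsCompleteToPart G part v a} ≤ p := by
    intro v hv
    rw [mem_filter_univ] at hv
    refine le_trans (card_le_card fun a ha => ?_) (hdeg v (hv ▸ hi))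
    rw [mem_filter] at ha ⊢
    exact ⟨mem_of_mem_erase ha.1, hv ▸ hM_lt a ha.1, ha.2⟩
  obtain ⟨S', hS'M, wit, hwit, hmatch, hMS'⟩ :=
    exists_induced_matching_of_subset_biUnion hcover hsmall
  have hM : #M = #S - 1 := card_erase_of_mem hi
  refine ⟨i, hi, S', hS'M.trans (erase_subset i S), fun a ha => hM_lt a (hS'M ha), ?_, wit,
    fun a ha => by simpa using hwit a ha, fun a ha b hb => ?_⟩
  · have : (q + 1) * p < #S' * p := by rw [mul_comm]; omega
    have := lt_of_mul_lt_mul_right this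
    omega
  · simpa [hS'M hb] using hmatch a ha b hb

theorem isTransversalMinorWithin_of_rightExtensionBound_lt (hmod : IsRightModular G part) :
    ∀ (ω h : ℕ) (S : Finset (Fin k)), (quotientGraph G part).IsClique (S : Set (Fin k)) →
      CliqueBoundedOn G part S ω → rightExtensionBound ω h < #S →
      ∀ H : SimpleGraph (Fin h), IsTransversalMinorWithin G part S H
  | _, 0, _, _, _, _, _ =>
    ⟨isEmptyElim, isEmptyElim, ⟨isEmptyElim, isEmptyElim, isEmptyElim, isEmptyElim⟩, isEmptyElim⟩
  | _, 1, S, hS, _, hcard, H => by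
    obtain ⟨u, -, hu, -⟩ := exists_adj_of_isClique_quotientGraph hS
      (by rwa [rightExtensionBound_one_right] at hcard)
    refine ⟨fun _ => part u, fun _ => {u},
      ⟨Subsingleton.strictMono _, fun _ => singleton_nonempty u,
        fun _ v hv => by rw [mem_singleton.1 hv], fun a b => ?_⟩, fun _ => hu⟩
    simp [Subsingleton.elim a b]
  | 0, _ + 2, S, hS, hω, hcard, _ | 1, _ + 2, S, hS, hω, hcard, _ => by
    obtain ⟨u, v, hu, hv, huv⟩ := exists_adj_of_isClique_quotientGraph hS
      ((one_le_rightExtensionBound _ _).trans_lt hcard)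
    have := hω.two_le hu hv huv
    omega
  | ω + 2, h + 2, S, hS, hω, hcard, H => by
    by_cases hlarge : ∃ v, part v ∈ S ∧ rightExtensionBound (ω + 1) (h + 2) <
      #{a ∈ S | a < part v ∧ IsCompleteToPart G part v a}
    · obtain ⟨v, hv, hlarge⟩ := hlarge
      exact (isTransversalMinorWithin_of_rightExtensionBound_lt hmod (ω + 1) (h + 2) _
        (hS.subset (filter_subset _ S)) (hω.filter_isCompleteToPart hv) hlarge H).mono
          (filter_subset _ S)
    · push Not at hlarge
      rw [rightExtensionBound] at hcard
      obtain ⟨i, hi, S', hS'S, hS'i, hS'card, wit, hwit, hmatch⟩ :=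
        exists_matching_into_max_part hmod hS hlarge hcard
      obtain ⟨a₀, ha₀⟩ : S'.Nonempty := card_pos.1 (by omega)
      have hS'₀ : S'.erase a₀ ⊆ S := (erase_subset a₀ S').trans hS'S
      exact .snoc_of_matching hmod hi hS'S hS'i hwit hmatch ha₀
        (isTransversalMinorWithin_of_rightExtensionBound_lt hmod (ω + 2) (h + 1) _
          (hS.subset hS'₀) (hω.mono hS'₀) (by rw [card_erase_of_mem ha₀]; omega) _)
termination_by ω h => ω + h

theorem cliqueNum_quotientGraph_le (hmod : IsRightModular G part) {h : ℕ}
    {H : SimpleGraph (Fin h)} (hH : ¬IsTransversalMinor G part H) :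
    (quotientGraph G part).cliqueNum ≤ rightExtensionBound G.cliqueNum h := by
  obtain ⟨S, hS⟩ := (quotientGraph G part).exists_isNClique_cliqueNum
  rw [← hS.card_eq]
  by_contra! hlt
  obtain ⟨j, W, hM, -⟩ := isTransversalMinorWithin_of_rightExtensionBound_lt hmod _ _ S
    hS.isClique (fun t ht _ => ht.card_le_cliqueNum) hlt H
  exact hH hM.isTransversalMinor

end

/-- If the hereditary class `C` of ordered graphs is χ-bounded by `f` and does
not contain some ordered graph on `h` vertices, then the right extension
`RM(C)` (graphs admitting a `C`-right-module-partition) is χ-bounded: every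
such `G` satisfies `χ(G) ≤ f(φ(ω(G), h))`, where `φ` is the function with
`φ(x,1) = φ(1,y) = 1` and `φ(ω,h) = φ(ω−1,h)·(φ(ω,h−1)+1)+1`. -/
theorem rightExtension_chi_bounded :
    ∃ φ : ℕ → ℕ → ℕ,
      (∀ x, 1 ≤ x → φ x 1 = 1) ∧ (∀ y, 1 ≤ y → φ 1 y = 1) ∧
      (∀ w h, 2 ≤ w → 2 ≤ h → φ w h = φ (w - 1) h * (φ w (h - 1) + 1) + 1) ∧
      ∀ (C : ∀ m : ℕ, SimpleGraph (Fin m) → Prop),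
        (∀ (m l : ℕ) (f : Fin l → Fin m), StrictMono f →
          ∀ H : SimpleGraph (Fin m), C m H → C l (H.comap f)) →
        ∀ f : ℕ → ℕ, Monotone f → (∀ (m : ℕ) (H : SimpleGraph (Fin m)), C m H →
          H.Colorable (f H.cliqueNum)) →
        ∀ (h : ℕ), 1 ≤ h → ∀ (H : SimpleGraph (Fin h)), ¬ C h H →
        ∀ (n k : ℕ) (G : SimpleGraph (Fin n)) (part : Fin n → Fin k),
          IsCRMP C G part →
            G.Colorable (f (φ G.cliqueNum h)) := by
  refine ⟨rightExtensionBound, fun x _ => rightExtensionBound_one_right x,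
    fun y _ => rightExtensionBound_one_left y, fun w h hw hh => rightExtensionBound_eq hw hh, ?_⟩
  rintro C - f hf hχ h - H hH n k G part ⟨⟨-, hsurj, hind, hmod⟩, hminor⟩
  have hQ := hχ k _ (hminor k _ (quotientGraph_isTransversalMinor hsurj))
  have hω := cliqueNum_quotientGraph_le hmod fun hHG => hH (hminor h H hHG)
  exact (hQ.mono (hf hω)).of_hom (quotientHom hind)
end

section
/- Let C be a class of graphs and (T, g) a C-tree-decomposition with depth d. Then ω(R(T, g)) ≥ d + 1. -/
universe u

/-- A finite rooted tree on the node set `α`, given by its root and parent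
function (the root is its own parent, and iterating the parent function
reaches the root from every node). -/
structure ParentTree (α : Type u) where
  root : α
  parent : α → α
  parent_root : parent root = root
  reaches_root : ∀ x, ∃ m : ℕ, parent^[m] x = root

namespace ParentTree

variable {α : Type u} (T : ParentTree α)

/-- `y` is a child of `x`. -/
def IsChild (y x : α) : Prop := T.parent y = x ∧ y ≠ x

/-- A leaf is a node with no children. -/
def IsLeaf (x : α) : Prop := ∀ y, ¬ T.IsChild y x

/-- `x` is a (weak) ancestor of `y`. -/
def Ancestor (x y : α) : Prop := ∃ m : ℕ, T.parent^[m] y = x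

def StrictAncestor (x y : α) : Prop := T.Ancestor x y ∧ x ≠ y

/-- `z` is the closest common ancestor of `x` and `y`. -/
def IsLCA (z x y : α) : Prop :=
  T.Ancestor z x ∧ T.Ancestor z y ∧
  ∀ w, T.Ancestor w x → T.Ancestor w y → T.Ancestor w z

/-- `y` is a grandchild of `x`. -/
def IsGrandchild (y x : α) : Prop := ∃ z, T.IsChild y z ∧ T.IsChild z x

end ParentTree



namespace ParentTree

variable {α : Type u} {T : ParentTree α}

lemma anc_refl (a : α) : T.Ancestor a a := ⟨0, rfl⟩

lemma anc_trans {a b c : α} (h1 : T.Ancestor a b) (h2 : T.Ancestor b c) :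
    T.Ancestor a c := by
  obtain ⟨m, hm⟩ := h1; obtain ⟨n, hn⟩ := h2
  exact ⟨m + n, by rw [Function.iterate_add_apply, hn, hm]⟩

lemma iterate_root (k : ℕ) : T.parent^[k] T.root = T.root :=
  Function.iterate_fixed T.parent_root k

lemma eq_root_of_cycle {v : α} {c : ℕ} (hc : c ≠ 0) (h : T.parent^[c] v = v) :
    v = T.root := by
  obtain ⟨m, hm⟩ := T.reaches_root v
  have hcyc : ∀ t : ℕ, T.parent^[t * c] v = v := by
    intro t
    induction t with
    | zero => simp
    | succ n ih => rw [Nat.succ_mul, Function.iterate_add_apply, h, ih]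
  have h1 : T.parent^[m * c] v = v := hcyc m
  have hmc : m ≤ m * c := Nat.le_mul_of_pos_right m (Nat.pos_of_ne_zero hc)
  calc v = T.parent^[m * c] v := h1.symm
    _ = T.parent^[m * c - m] (T.parent^[m] v) := by
        rw [← Function.iterate_add_apply]; congr 1; omega
    _ = T.root := by rw [hm, iterate_root]

lemma anc_antisymm {a b : α} (h1 : T.Ancestor a b) (h2 : T.Ancestor b a) :
    a = b := by
  obtain ⟨m, hm⟩ := h1; obtain ⟨n, hn⟩ := h2
  rcases Nat.eq_zero_or_pos (m + n) with h | h
  · obtain ⟨rfl, rfl⟩ : m = 0 ∧ n = 0 := by omega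
    simpa using hm.symm
  · have hc : T.parent^[n + m] b = b := by
      rw [Function.iterate_add_apply, hm, hn]
    have hb : b = T.root := eq_root_of_cycle (by omega) hc
    subst hb
    rw [iterate_root] at hm
    exact hm.symm

lemma anc_parent {a b : α} (h : T.Ancestor a b) (hne : a ≠ b) :
    T.Ancestor a (T.parent b) := by
  obtain ⟨m, hm⟩ := h
  rcases Nat.eq_zero_or_pos m with rfl | hp
  · simp only [Function.iterate_zero, id_eq] at hm
    exact absurd hm.symm hne
  · rw [show m = m - 1 + 1 by omega, Function.iterate_succ_apply] at hm
    exact ⟨m - 1, hm⟩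

lemma anc_comp {a b c : α} (h1 : T.Ancestor a c) (h2 : T.Ancestor b c) :
    T.Ancestor a b ∨ T.Ancestor b a := by
  obtain ⟨m, hm⟩ := h1; obtain ⟨n, hn⟩ := h2
  rcases le_total m n with h | h
  · right
    exact ⟨n - m, by rw [← hm, ← Function.iterate_add_apply, ← hn]; congr 1; omega⟩
  · left
    exact ⟨m - n, by rw [← hn, ← Function.iterate_add_apply, ← hm]; congr 1; omega⟩

lemma parent_anc {u p : α} (h : T.parent u = p) : T.Ancestor p u := ⟨1, h⟩

lemma not_anc_of_child {u p : α} (hu : T.IsChild u p) : ¬ T.Ancestor u p := by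
  intro h
  exact hu.2 (anc_antisymm h (parent_anc hu.1))

lemma anc_of_child {v u p : α} (hu : T.IsChild u p) (h : T.Ancestor v u)
    (hne : v ≠ u) : T.Ancestor v p := by
  have := anc_parent h hne; rwa [hu.1] at this

/-- The central LCA lemma: if `u ≠ w` are children of `p` with `ℓ` below `u`
and `x` below `w`, then `p` is the LCA of `ℓ` and `x`, and `ℓ ≠ x`. -/
lemma lca_pair {p u w ℓ x : α} (hu : T.IsChild u p) (hw : T.IsChild w p)
    (huw : u ≠ w) (hℓ : T.Ancestor u ℓ) (hx : T.Ancestor w x) :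
    T.IsLCA p ℓ x ∧ ℓ ≠ x := by
  have hpu : T.Ancestor p u := parent_anc hu.1
  have hpw : T.Ancestor p w := parent_anc hw.1
  have habs : ∀ {a b : α}, T.IsChild a p → a ≠ b → T.IsChild b p →
      T.Ancestor a b → False := by
    intro a b ha hab hb h
    exact not_anc_of_child ha (anc_of_child hb h hab)
  constructor
  · refine ⟨anc_trans hpu hℓ, anc_trans hpw hx, ?_⟩
    intro v hvℓ hvx
    by_cases hvu : v = u
    · subst hvu
      rcases anc_comp hvx hx with h | h
      · exact absurd h (fun h => habs hu huw hw h)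
      · exact absurd h (fun h => habs hw huw.symm hu h)
    · rcases anc_comp hvℓ hℓ with h | h
      · exact anc_of_child hu h hvu
      · rcases anc_comp hvx hx with h2 | h2
        · exact absurd (anc_trans h h2) (fun h3 => habs hu huw hw h3)
        · rcases anc_comp h h2 with h3 | h3
          · exact absurd h3 (fun h3 => habs hu huw hw h3)
          · exact absurd h3 (fun h3 => habs hw huw.symm hu h3)
  · rintro rfl
    rcases anc_comp hℓ hx with h | h
    · exact habs hu huw hw h
    · exact habs hw huw.symm hu h

attribute [local instance] Classical.propDecidable

/-- Distance to the root. -/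
noncomputable def dist (T : ParentTree α) (z : α) : ℕ := Nat.find (T.reaches_root z)

lemma dist_spec (z : α) : T.parent^[T.dist z] z = T.root := Nat.find_spec (T.reaches_root z)

lemma dist_min {z : α} {k : ℕ} (h : k < T.dist z) : T.parent^[k] z ≠ T.root :=
  Nat.find_min (T.reaches_root z) h

lemma dist_lt_card [Fintype α] (z : α) : T.dist z < Fintype.card α := by
  have hkey : ∀ i j : ℕ, i < j → j ≤ T.dist z → T.parent^[i] z ≠ T.parent^[j] z := by
    intro i j hij hj heq
    have hroot : T.parent^[T.dist z - j + i] z = T.root := by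
      have h1 : T.parent^[(T.dist z - j) + j] z = T.root := by
        rw [Nat.sub_add_cancel hj]; exact dist_spec z
      rw [Function.iterate_add_apply, ← heq, ← Function.iterate_add_apply] at h1
      exact h1
    exact dist_min (by omega) hroot
  have hinj : Function.Injective (fun i : Fin (T.dist z + 1) => T.parent^[(i : ℕ)] z) := by
    intro i j hij
    simp only at hij
    rcases lt_trichotomy (i : ℕ) (j : ℕ) with h | h | h
    · exact absurd hij (hkey _ _ h (by omega))
    · exact Fin.ext h
    · exact absurd hij.symm (hkey _ _ h (by omega))
  have := Fintype.card_le_of_injective _ hinj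
  simpa using this

lemma dist_child {y z : α} (h : T.IsChild y z) : T.dist z < T.dist y := by
  have hyroot : y ≠ T.root := by
    rintro rfl
    exact h.2 (by rw [← h.1, T.parent_root])
  have hd0 : T.dist y ≠ 0 := by
    intro h0
    have := dist_spec (T := T) y
    rw [h0] at this
    exact hyroot this
  have : T.parent^[T.dist y - 1] z = T.root := by
    have hs := dist_spec (T := T) y
    rw [show T.dist y = (T.dist y - 1) + 1 by omega, Function.iterate_succ_apply, h.1] at hs
    exact hs
  have : T.dist z ≤ T.dist y - 1 := Nat.find_le this
  omega

lemma exists_leaf_desc [Fintype α] (z : α) :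
    ∃ ℓ, T.IsLeaf ℓ ∧ T.Ancestor z ℓ := by
  have key : ∀ n (z : α), Fintype.card α - T.dist z ≤ n → ∃ ℓ, T.IsLeaf ℓ ∧ T.Ancestor z ℓ := by
    intro n
    induction n with
    | zero =>
      intro z hz
      exact absurd (dist_lt_card (T := T) z) (by omega)
    | succ n ih =>
      intro z hz
      by_cases hleaf : T.IsLeaf z
      · exact ⟨z, hleaf, anc_refl z⟩
      · simp only [IsLeaf, not_forall, not_not] at hleaf
        obtain ⟨y, hy⟩ := hleaf
        have h1 := dist_child hy
        have h2 := dist_lt_card (T := T) z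
        obtain ⟨ℓ, hℓ, ha⟩ := ih y (by omega)
        exact ⟨ℓ, hℓ, anc_trans (parent_anc hy.1) ha⟩
  exact key (Fintype.card α) z (by omega)

end ParentTree

/-- `R` is the realization `R(T,g)` of the tree decomposition `(T,g)`:
its vertices are the leaves of `T`, and two leaves are adjacent iff the
children of their closest common ancestor `z` above them are adjacent
in `g(z)`. -/
def IsRealization {α : Type u} (T : ParentTree α) (g : α → SimpleGraph α)
    (R : SimpleGraph {v : α // T.IsLeaf v}) : Prop :=
  ∀ u v : {v : α // T.IsLeaf v}, R.Adj u v ↔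
    ∃ z x' y', T.IsLCA z u v ∧ T.IsChild x' z ∧ T.IsChild y' z ∧
      T.Ancestor x' u ∧ T.Ancestor y' v ∧ (g z).Adj x' y'

/-- A non-root node `w` is non-isolated when it has a neighbour in
`g(parent w)`; the depth of a node is the number of its strict ancestors that
are not isolated. For every `C`-tree-decomposition `(T,g)` (here `g x` is a
graph on the children of `x`) and every leaf `x` of depth `d`, the realization
contains a clique of size `d + 1`; hence `ω(R(T,g)) ≥ depth(T,g) + 1`. -/
theorem cliqueNum_realization_ge_depth {α : Type u} [Fintype α]
    (T : ParentTree α) (g : α → SimpleGraph α)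
    (hsupp : ∀ x y z, (g x).Adj y z → T.IsChild y x ∧ T.IsChild z x)
    (R : SimpleGraph {v : α // T.IsLeaf v}) (hR : IsRealization T g R)
    (x : α) (hx : T.IsLeaf x) :
    {w : α | T.StrictAncestor w x ∧ w ≠ T.root ∧
      ∃ u, (g (T.parent w)).Adj w u}.ncard + 1 ≤ R.cliqueNum := by
  classical
  set S : Set α := {w : α | T.StrictAncestor w x ∧ w ≠ T.root ∧
      ∃ u, (g (T.parent w)).Adj w u} with hS
  have hch : ∀ w : α, ∃ ul : α × α, w ∈ S →
      ((g (T.parent w)).Adj w ul.1 ∧ T.IsLeaf ul.2 ∧ T.Ancestor ul.1 ul.2) := by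
    intro w
    by_cases hw : w ∈ S
    · obtain ⟨u, hu⟩ := hw.2.2
      obtain ⟨ℓ, hℓ, ha⟩ := ParentTree.exists_leaf_desc (T := T) u
      exact ⟨(u, ℓ), fun _ => ⟨hu, hℓ, ha⟩⟩
    · exact ⟨(x, x), fun h => absurd h hw⟩
  choose F hF using hch
  have key : ∀ w ∈ S, ∀ ℓ₂ : α, T.Ancestor w ℓ₂ →
      ((F w).2 ≠ ℓ₂ ∧ ∀ (h1 : T.IsLeaf (F w).2) (h2 : T.IsLeaf ℓ₂),
        R.Adj ⟨(F w).2, h1⟩ ⟨ℓ₂, h2⟩) := by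
    intro w hw ℓ₂ hℓ₂
    obtain ⟨hadj, hleaf, hanc⟩ := hF w hw
    have hwc : T.IsChild w (T.parent w) := (hsupp _ _ _ hadj).1
    have huc : T.IsChild (F w).1 (T.parent w) := (hsupp _ _ _ hadj).2
    have hne : (F w).1 ≠ w := hadj.ne'
    obtain ⟨hlca, hneq⟩ := ParentTree.lca_pair huc hwc hne hanc hℓ₂
    refine ⟨hneq, fun h1 h2 => ?_⟩
    rw [hR]
    exact ⟨T.parent w, (F w).1, w, hlca, huc, hwc, hanc, hℓ₂, hadj.symm⟩
  -- below each other's subtree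
  have hbelow : ∀ w ∈ S, ∀ w' ∈ S, T.Ancestor w w' → w ≠ w' →
      T.Ancestor w (F w').2 := by
    intro w hw w' hw' hanc hne
    obtain ⟨hadj', _, hanc'⟩ := hF w' hw'
    have hwc' : T.IsChild w' (T.parent w') := (hsupp _ _ _ hadj').1
    have huc' : T.IsChild (F w').1 (T.parent w') := (hsupp _ _ _ hadj').2
    have h1 : T.Ancestor w (T.parent w') := ParentTree.anc_of_child hwc' hanc hne
    exact ParentTree.anc_trans h1
      (ParentTree.anc_trans (ParentTree.parent_anc huc'.1) hanc')
  have hLne : ∀ w ∈ S, ∀ w' ∈ S, w ≠ w' → (F w).2 ≠ (F w').2 ∧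
      ∀ (h1 : T.IsLeaf (F w).2) (h2 : T.IsLeaf (F w').2),
        R.Adj ⟨(F w).2, h1⟩ ⟨(F w').2, h2⟩ := by
    intro w hw w' hw' hne
    rcases ParentTree.anc_comp hw.1.1 hw'.1.1 with h | h
    · exact key w hw _ (hbelow w hw w' hw' h hne)
    · obtain ⟨h1, h2⟩ := key w' hw' _ (hbelow w' hw' w hw h hne.symm)
      exact ⟨fun he => h1 he.symm, fun ha hb => (h2 hb ha).symm⟩
  let f : α → {v : α // T.IsLeaf v} :=
    fun w => if h : w ∈ S then ⟨(F w).2, (hF w h).2.1⟩ else ⟨x, hx⟩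
  have hfval : ∀ w ∈ S, (f w : α) = (F w).2 := by
    intro w hw; simp only [f, dif_pos hw]
  set K : Set {v : α // T.IsLeaf v} := insert ⟨x, hx⟩ (f '' S) with hK
  have hxnot : (⟨x, hx⟩ : {v : α // T.IsLeaf v}) ∉ f '' S := by
    rintro ⟨w, hw, hfw⟩
    have := (key w hw x hw.1.1).1
    apply this
    rw [← hfval w hw, hfw]
  have hinj : Set.InjOn f S := by
    intro w hw w' hw' hfe
    by_contra hne
    have := (hLne w hw w' hw' hne).1
    apply this
    rw [← hfval w hw, ← hfval w' hw', hfe]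
  have hclique : R.IsClique K := by
    rintro a (rfl | ⟨w, hw, rfl⟩) b (rfl | ⟨w', hw', rfl⟩) hab
    · exact absurd rfl hab
    · have hw'x := key w' hw' x hw'.1.1
      have := hw'x.2 (hF w' hw').2.1 hx
      have heq : f w' = ⟨(F w').2, (hF w' hw').2.1⟩ := by
        simp only [f, dif_pos hw']
      rw [heq]
      exact this.symm
    · have hwx := key w hw x hw.1.1
      have := hwx.2 (hF w hw).2.1 hx
      have heq : f w = ⟨(F w).2, (hF w hw).2.1⟩ := by
        simp only [f, dif_pos hw]
      rw [heq]
      exact this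
    · have hne : w ≠ w' := by rintro rfl; exact hab rfl
      have := (hLne w hw w' hw' hne).2 (hF w hw).2.1 (hF w' hw').2.1
      have heq : f w = ⟨(F w).2, (hF w hw).2.1⟩ := by simp only [f, dif_pos hw]
      have heq' : f w' = ⟨(F w').2, (hF w' hw').2.1⟩ := by simp only [f, dif_pos hw']
      rw [heq, heq']
      exact this
  haveI : Fintype {v : α // T.IsLeaf v} := Fintype.ofFinite _
  have hfin : K.Finite := Set.toFinite K
  have hcoe : R.IsClique (hfin.toFinset : Set {v : α // T.IsLeaf v}) := by
    rwa [Set.Finite.coe_toFinset]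
  have hle : hfin.toFinset.card ≤ R.cliqueNum :=
    SimpleGraph.IsClique.card_le_cliqueNum (tc := hcoe)
  have hKcard : K.ncard = S.ncard + 1 := by
    rw [hK, Set.ncard_insert_of_notMem hxnot, Set.ncard_image_of_injOn hinj]
  rw [← hKcard, Set.ncard_eq_toFinset_card K hfin]
  exact hle
end

section
/- If every graph in a class C satisfies χ ≤ ω^k, then every graph in C_i (realizations of independent C-tree-decompositions) satisfies χ ≤ ω^{k+1}. -/
universe u

namespace ParentTree

variable {α : Type u} (T : ParentTree α)

variable {T}

lemma ancestor_refl (x : α) : T.Ancestor x x := ⟨0, rfl⟩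

lemma ancestor_parent (x : α) : T.Ancestor (T.parent x) x := ⟨1, rfl⟩

lemma ancestor_trans {x y z : α} (h1 : T.Ancestor x y) (h2 : T.Ancestor y z) :
    T.Ancestor x z := by
  obtain ⟨m, hm⟩ := h1; obtain ⟨n, hn⟩ := h2
  exact ⟨m + n, by rw [Function.iterate_add_apply, hn, hm]⟩

lemma iterate_parent_root (m : ℕ) : T.parent^[m] T.root = T.root :=
  Function.iterate_fixed T.parent_root m

lemma eq_root_of_parent_eq {x : α} (h : T.parent x = x) : x = T.root := by
  obtain ⟨m, hm⟩ := T.reaches_root x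
  rw [Function.iterate_fixed h m] at hm
  exact hm

lemma ancestor_antisymm {x y : α} (h1 : T.Ancestor x y) (h2 : T.Ancestor y x) : x = y := by
  obtain ⟨m, hm⟩ := h1; obtain ⟨n, hn⟩ := h2
  rcases Nat.eq_zero_or_pos m with hm0 | hmpos
  · subst hm0; exact hm.symm
  have hfix : T.parent^[m + n] x = x := by
    rw [Function.iterate_add_apply, hn, hm]
  obtain ⟨M, hM⟩ := T.reaches_root x
  have hmul : T.parent^[(m + n) * M] x = x := by
    rw [Function.iterate_mul]
    exact Function.iterate_fixed hfix M
  have hge : M ≤ (m + n) * M := Nat.le_mul_of_pos_left M (by omega)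
  have hroot : T.parent^[(m + n) * M] x = T.root := by
    have : (m + n) * M = ((m + n) * M - M) + M := by omega
    rw [this, Function.iterate_add_apply, hM, iterate_parent_root]
  have hx : x = T.root := by rw [← hmul, hroot]
  have hy : y = T.root := by
    rw [← hn, hx, iterate_parent_root]
  rw [hx, hy]

lemma ancestor_parent_of_ne {w u : α} (h : T.Ancestor w u) (hne : w ≠ u) :
    T.Ancestor w (T.parent u) := by
  obtain ⟨m, hm⟩ := h
  rcases Nat.eq_zero_or_pos m with h0 | hpos
  · subst h0; exact absurd hm.symm hne
  · have key : T.parent^[m - 1] (T.parent u) = w := by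
      rw [← Function.iterate_succ_apply T.parent (m-1) u, Nat.succ_eq_add_one,
        Nat.sub_add_cancel hpos]
      exact hm
    exact ⟨m - 1, key⟩

lemma exists_child_between {x u : α} (h : T.Ancestor x u) (hne : x ≠ u) :
    ∃ c, T.IsChild c x ∧ T.Ancestor c u := by
  classical
  have h' : ∃ m, T.parent^[m] u = x := h
  set m := Nat.find h' with hmdef
  have hm : T.parent^[m] u = x := Nat.find_spec h'
  have hmpos : 0 < m := by
    rcases Nat.eq_zero_or_pos m with h0 | h1
    · exact absurd (by rw [← hm, h0]; rfl) (Ne.symm hne)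
    · exact h1
  refine ⟨T.parent^[m - 1] u, ⟨?_, ?_⟩, ⟨m - 1, rfl⟩⟩
  · rw [← Function.iterate_succ_apply' T.parent (m-1) u, Nat.succ_eq_add_one,
      Nat.sub_add_cancel hmpos]
    exact hm
  · intro hc
    exact Nat.find_min h' (by omega : m - 1 < m) hc

lemma IsLeaf.ancestor_eq {x u : α} (hx : T.IsLeaf x) (h : T.Ancestor x u) : x = u := by
  by_contra hne
  obtain ⟨c, hc, _⟩ := exists_child_between h hne
  exact hx c hc

lemma ancestor_comparable {x y u : α} (hx : T.Ancestor x u) (hy : T.Ancestor y u) :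
    T.Ancestor x y ∨ T.Ancestor y x := by
  obtain ⟨m, hm⟩ := hx; obtain ⟨n, hn⟩ := hy
  rcases le_total m n with h | h
  · right
    exact ⟨n - m, by rw [← hm, ← Function.iterate_add_apply, Nat.sub_add_cancel h, hn]⟩
  · left
    exact ⟨m - n, by rw [← hn, ← Function.iterate_add_apply, Nat.sub_add_cancel h, hm]⟩

lemma IsChild.not_ancestor {x y z : α} (hx : T.IsChild x z) (hy : T.IsChild y z)
    (hne : x ≠ y) : ¬ T.Ancestor x y := by
  intro h
  have h2 : T.Ancestor x (T.parent y) := ancestor_parent_of_ne h hne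
  rw [hy.1] at h2
  have h3 : T.Ancestor z x := ⟨1, by simpa using hx.1⟩
  exact hx.2 (ancestor_antisymm h2 h3 ▸ rfl)

lemma isLCA_of_children {z x' y' u v : α} (hx : T.IsChild x' z) (hy : T.IsChild y' z)
    (hne : x' ≠ y') (hxu : T.Ancestor x' u) (hyv : T.Ancestor y' v) :
    T.IsLCA z u v := by
  have hzx : T.Ancestor z x' := ⟨1, by simpa using hx.1⟩
  have hzy : T.Ancestor z y' := ⟨1, by simpa using hy.1⟩
  refine ⟨ancestor_trans hzx hxu, ancestor_trans hzy hyv, ?_⟩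
  intro w hwu hwv
  have h1 : T.Ancestor w z ∨ T.Ancestor x' w := by
    rcases ancestor_comparable hwu hxu with h | h
    · by_cases hwx : w = x'
      · exact Or.inr (hwx ▸ ancestor_refl w)
      · exact Or.inl (hx.1 ▸ ancestor_parent_of_ne h hwx)
    · exact Or.inr h
  have h2 : T.Ancestor w z ∨ T.Ancestor y' w := by
    rcases ancestor_comparable hwv hyv with h | h
    · by_cases hwy : w = y'
      · exact Or.inr (hwy ▸ ancestor_refl w)
      · exact Or.inl (hy.1 ▸ ancestor_parent_of_ne h hwy)
    · exact Or.inr h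
  rcases h1 with h1 | h1
  · exact h1
  rcases h2 with h2 | h2
  · exact h2
  exfalso
  rcases ancestor_comparable h1 h2 with h | h
  · exact hx.not_ancestor hy hne h
  · exact hy.not_ancestor hx (Ne.symm hne) h

lemma exists_leaf_descendant [Fintype α] (x : α) :
    ∃ v, T.IsLeaf v ∧ T.Ancestor x v := by
  classical
  let f : α → ℕ := fun y => if h : T.Ancestor x y then Nat.find h else 0
  obtain ⟨y, hy, hymax⟩ := Finset.exists_max_image
    (Finset.univ.filter (fun y => T.Ancestor x y)) f
    ⟨x, by simp [ancestor_refl]⟩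
  simp only [Finset.mem_filter, Finset.mem_univ, true_and] at hy
  refine ⟨y, ?_, hy⟩
  intro c hc
  have hxc : T.Ancestor x c := ancestor_trans hy (hc.1 ▸ ancestor_parent c)
  have hle : f c ≤ f y := hymax c (by simp [hxc])
  have hfc : T.parent^[f c] c = x := by
    simp only [f, dif_pos hxc]
    exact Nat.find_spec hxc
  have hfcpos : 0 < f c := by
    rcases Nat.eq_zero_or_pos (f c) with h0 | h1
    · exfalso
      rw [h0] at hfc
      -- c = x
      have hcx : c = x := hfc
      have hyc : T.Ancestor y c := hc.1 ▸ ancestor_parent c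
      have : x = y := ancestor_antisymm hy (hcx ▸ hyc)
      exact hc.2 (by rw [hcx, this])
    · exact h1
  have hstep : T.parent^[f c - 1] y = x := by
    rw [← hc.1, ← Function.iterate_succ_apply T.parent (f c - 1) c,
      Nat.succ_eq_add_one, Nat.sub_add_cancel hfcpos]
    exact hfc
  have : f y ≤ f c - 1 := by
    simp only [f, dif_pos hy]
    exact Nat.find_min' hy hstep
  omega

end ParentTree

namespace RealizationAux

open ParentTree

variable {α : Type u} {T : ParentTree α} {g : α → SimpleGraph α}
  {R : SimpleGraph {v : α // T.IsLeaf v}}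

lemma adj_of_witness (hR : IsRealization T g R) {u v : {v : α // T.IsLeaf v}}
    {z x' y' : α} (hx : T.IsChild x' z) (hy : T.IsChild y' z)
    (hxu : T.Ancestor x' ↑u) (hyv : T.Ancestor y' ↑v) (hadj : (g z).Adj x' y') :
    R.Adj u v :=
  (hR u v).2 ⟨z, x', y', isLCA_of_children hx hy hadj.ne hxu hyv, hx, hy, hxu, hyv, hadj⟩

lemma clique_bound {V ι : Type*} [Fintype V] (G : SimpleGraph V) (s : Finset ι) (f : ι → V)
    (h : ∀ i ∈ s, ∀ j ∈ s, i ≠ j → G.Adj (f i) (f j)) : s.card ≤ G.cliqueNum := by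
  classical
  have hinj : Set.InjOn f s := by
    intro i hi j hj hf
    by_contra hne
    exact G.irrefl (hf ▸ h i hi j hj hne)
  have hcl : G.IsClique (s.image f : Finset V) := by
    intro a ha b hb hab
    simp only [Finset.coe_image, Set.mem_image, Finset.mem_coe] at ha hb
    obtain ⟨i, hi, rfl⟩ := ha
    obtain ⟨j, hj, rfl⟩ := hb
    exact h i hi j hj (fun hij => hab (by rw [hij]))
  calc s.card = (s.image f).card := (Finset.card_image_of_injOn hinj).symm
    _ ≤ G.cliqueNum := SimpleGraph.IsClique.card_le_cliqueNum (tc := hcl)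

/-- `w` is non-isolated in the graph at its parent. -/
def NonIso (T : ParentTree α) (g : α → SimpleGraph α) (w : α) : Prop :=
  ∃ s, (g (T.parent w)).Adj w s

/-- The number of non-isolated strict ancestors of `v`. -/
noncomputable def dep (T : ParentTree α) (g : α → SimpleGraph α) (v : α) : ℕ :=
  {w | T.StrictAncestor w v ∧ NonIso T g w}.ncard

lemma depth_clique [Fintype α]
    (hsupp : ∀ x y z, (g x).Adj y z → T.IsChild y x ∧ T.IsChild z x)
    (hind : ∀ z x y, (g z).Adj x y → T.IsLeaf x ∨ T.IsLeaf y)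
    (hR : IsRealization T g R) (v : {v : α // T.IsLeaf v}) :
    dep T g ↑v + 1 ≤ R.cliqueNum := by
  classical
  haveI : Fintype {v : α // T.IsLeaf v} := Fintype.ofFinite _
  set S : Set α := {w | T.StrictAncestor w ↑v ∧ NonIso T g w} with hSdef
  let sw : α → α := fun w => if h : NonIso T g w then h.choose else w
  have hsw : ∀ w, NonIso T g w → (g (T.parent w)).Adj w (sw w) := by
    intro w h
    simp only [sw, dif_pos h]
    exact h.choose_spec
  have hwprop : ∀ w ∈ S, T.IsChild w (T.parent w) ∧ T.IsChild (sw w) (T.parent w)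
      ∧ T.IsLeaf (sw w) ∧ T.Ancestor w ↑v := by
    intro w hw
    obtain ⟨hstrict, hni⟩ := hw
    have hadj := hsw w hni
    have hch := hsupp (T.parent w) w (sw w) hadj
    have hleaf : T.IsLeaf (sw w) := by
      rcases hind (T.parent w) w (sw w) hadj with h | h
      · exact absurd (h.ancestor_eq hstrict.1) hstrict.2
      · exact h
    exact ⟨hch.1, hch.2, hleaf, hstrict.1⟩
  have hSfin : S.Finite := Set.toFinite S
  set F : Finset α := hSfin.toFinset with hFdef
  have hmemF : ∀ w, w ∈ F ↔ w ∈ S := fun w => hSfin.mem_toFinset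
  have hvS : (↑v : α) ∉ S := fun h => h.1.2 rfl
  have hvF : (↑v : α) ∉ F := fun h => hvS ((hmemF _).1 h)
  let f : α → {v : α // T.IsLeaf v} := fun w =>
    if h : w ∈ S then ⟨sw w, (hwprop w h).2.2.1⟩ else v
  have hfv : f ↑v = v := dif_neg hvS
  have hfw : ∀ w (h : w ∈ S), f w = ⟨sw w, (hwprop w h).2.2.1⟩ := fun w h => dif_pos h
  -- adjacency between v and a picked neighbour
  have hadj_v : ∀ w ∈ S, R.Adj v (f w) := by
    intro w hw
    rw [hfw w hw]
    obtain ⟨hw1, hw2, hw3, hw4⟩ := hwprop w hw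
    exact adj_of_witness hR hw1 hw2 hw4 (ancestor_refl _) (hsw w hw.2)
  have hadj_two : ∀ a ∈ S, ∀ b ∈ S, T.Ancestor b a → a ≠ b → R.Adj (f a) (f b) := by
    intro a ha b hb hba hne
    rw [hfw a ha, hfw b hb]
    obtain ⟨ha1, ha2, ha3, ha4⟩ := hwprop a ha
    obtain ⟨hb1, hb2, hb3, hb4⟩ := hwprop b hb
    have h1 : T.Ancestor b (T.parent a) := ancestor_parent_of_ne hba (Ne.symm hne)
    have h2 : T.Ancestor (T.parent a) (sw a) := ⟨1, by simpa using ha2.1⟩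
    exact adj_of_witness hR hb1 hb2 (ancestor_trans h1 h2) (ancestor_refl _) (hsw b hb.2)
  have hbound : (insert (↑v : α) F).card ≤ R.cliqueNum := by
    apply clique_bound R _ f
    intro i hi j hj hij
    rcases Finset.mem_insert.1 hi with rfl | hiF
    · rcases Finset.mem_insert.1 hj with rfl | hjF
      · exact absurd rfl hij
      · rw [hfv]
        exact hadj_v j ((hmemF _).1 hjF)
    · rcases Finset.mem_insert.1 hj with rfl | hjF
      · rw [hfv]
        exact (hadj_v i ((hmemF _).1 hiF)).symm
      · have hiS := (hmemF _).1 hiF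
        have hjS := (hmemF _).1 hjF
        rcases ancestor_comparable (hwprop i hiS).2.2.2 (hwprop j hjS).2.2.2 with h | h
        · exact (hadj_two j hjS i hiS h (Ne.symm hij)).symm
        · exact hadj_two i hiS j hjS h hij
  have hcard : (insert (↑v : α) F).card = dep T g ↑v + 1 := by
    rw [Finset.card_insert_of_notMem hvF]
    congr 1
    exact (Set.ncard_eq_toFinset_card S hSfin).symm
  rw [← hcard]
  exact hbound

lemma induced_cliqueNum_le [Fintype α] (hR : IsRealization T g R) (p : α) :
    ((g p).induce {y : α | T.IsChild y p}).cliqueNum ≤ R.cliqueNum := by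
  classical
  haveI : Fintype {v : α // T.IsLeaf v} := Fintype.ofFinite _
  haveI : Fintype ↥{y : α | T.IsChild y p} := Fintype.ofFinite _
  obtain ⟨s, hs⟩ := SimpleGraph.exists_isNClique_cliqueNum
    (G := (g p).induce {y : α | T.IsChild y p})
  rw [← hs.2]
  have hlf : ∀ c : α, T.Ancestor c ↑((⟨(exists_leaf_descendant (T := T) c).choose,
      (exists_leaf_descendant (T := T) c).choose_spec.1⟩ : {v : α // T.IsLeaf v})) :=
    fun c => (exists_leaf_descendant (T := T) c).choose_spec.2
  apply clique_bound R s (fun c => ⟨(exists_leaf_descendant (T := T) (↑c : α)).choose,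
      (exists_leaf_descendant (T := T) (↑c : α)).choose_spec.1⟩)
  intro i hi j hj hij
  have hadj : ((g p).induce {y : α | T.IsChild y p}).Adj i j := hs.1 hi hj hij
  have hadj' : (g p).Adj ↑i ↑j := hadj
  exact adj_of_witness hR i.2 j.2 (hlf ↑i) (hlf ↑j) hadj'

lemma dep_lt_of [Fintype α] {u v y' z : α} (hv_leaf : T.IsLeaf v)
    (huz : T.IsChild u z) (hy : T.IsChild y' z) (hyv : T.Ancestor y' v) (hyne : y' ≠ v)
    (hadj : (g z).Adj u y') : dep T g u < dep T g v := by
  apply Set.ncard_lt_ncard _ (Set.toFinite _)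
  rw [Set.ssubset_iff_of_subset]
  · refine ⟨y', ⟨⟨hyv, hyne⟩, ⟨u, by rw [hy.1]; exact hadj.symm⟩⟩, ?_⟩
    intro hyS
    have h1 : T.Ancestor y' (T.parent u) := ancestor_parent_of_ne hyS.1.1 hyS.1.2
    rw [huz.1] at h1
    have h2 : T.Ancestor z y' := ⟨1, by simpa using hy.1⟩
    exact hy.2 (ancestor_antisymm h1 h2)
  · intro w hw
    obtain ⟨hws, hwni⟩ := hw
    have hwz : T.Ancestor w z := by
      have := ancestor_parent_of_ne hws.1 hws.2
      rwa [huz.1] at this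
    have hzv : T.Ancestor z v := ancestor_trans ⟨1, by simpa using hy.1⟩ hyv
    have hwv : T.Ancestor w v := ancestor_trans hwz hzv
    refine ⟨⟨hwv, ?_⟩, hwni⟩
    intro hweq
    have hvz : v = z := ancestor_antisymm (hweq ▸ hwz) hzv
    exact hv_leaf y' (hvz ▸ hy)

end RealizationAux

open ParentTree RealizationAux

/-- If every graph of the class `C` satisfies `χ ≤ ω^k`, then every
realization of an independent `C`-tree-decomposition (no two internal
children of a common node are adjacent in the decomposition graphs) satisfies
`χ ≤ ω^(k+1)`. -/
theorem realization_independent_colorable {α : Type u} [Fintype α] (k : ℕ)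
    (C : ∀ β : Type u, SimpleGraph β → Prop)
    (hchi : ∀ (β : Type u) [Fintype β] (H : SimpleGraph β), C β H →
      H.Colorable (H.cliqueNum ^ k))
    (T : ParentTree α) (g : α → SimpleGraph α)
    (hsupp : ∀ x y z, (g x).Adj y z → T.IsChild y x ∧ T.IsChild z x)
    (hmem : ∀ x : α, ¬ T.IsLeaf x →
      C {y : α // T.IsChild y x} ((g x).induce {y : α | T.IsChild y x}))
    (hind : ∀ z x y, (g z).Adj x y → T.IsLeaf x ∨ T.IsLeaf y)
    (R : SimpleGraph {v : α // T.IsLeaf v}) (hR : IsRealization T g R) :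
    R.Colorable (R.cliqueNum ^ (k + 1)) := by
  classical
  haveI : Fintype {v : α // T.IsLeaf v} := Fintype.ofFinite _
  by_cases hne : Nonempty {v : α // T.IsLeaf v}
  swap
  · exact ⟨⟨fun v => (hne ⟨v⟩).elim, fun {a b} _ => (hne ⟨a⟩).elim⟩⟩
  set W := R.cliqueNum with hWdef
  have hdep : ∀ v : {v : α // T.IsLeaf v}, dep T g ↑v < W :=
    fun v => Nat.lt_of_succ_le (depth_clique hsupp hind hR v)
  have hWpos : 0 < W := by
    obtain ⟨v⟩ := hne
    exact Nat.lt_of_le_of_lt (Nat.zero_le _) (hdep v)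
  have hpk : 0 < W ^ k := pow_pos hWpos k
  have hcolp : ∀ p : α, ¬ T.IsLeaf p →
      ((g p).induce {y : α | T.IsChild y p}).Colorable (W ^ k) := by
    intro p hp
    haveI : Fintype ↥{y : α | T.IsChild y p} := Fintype.ofFinite _
    exact (hchi _ _ (hmem p hp)).mono
      (Nat.pow_le_pow_left (induced_cliqueNum_le hR p) k)
  let col : ∀ p : α, ¬ T.IsLeaf p →
      ((g p).induce {y : α | T.IsChild y p}).Coloring (Fin (W ^ k)) :=
    fun p hp => (hcolp p hp).some
  let col' : α → α → Fin (W ^ k) := fun p y =>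
    if hp : ¬ T.IsLeaf p then
      (if hy : T.IsChild y p then col p hp ⟨y, hy⟩ else ⟨0, hpk⟩)
    else ⟨0, hpk⟩
  have hcol' : ∀ z u v, T.IsChild u z → T.IsChild v z → (g z).Adj u v →
      col' z u ≠ col' z v := by
    intro z u v hu hv hadj
    have hzl : ¬ T.IsLeaf z := fun h => h u hu
    simp only [col', dif_pos hzl, dif_pos hu, dif_pos hv]
    exact (col z hzl).valid hadj
  let Cf : {v : α // T.IsLeaf v} → Fin W × Fin (W ^ k) :=
    fun v => (⟨dep T g ↑v, hdep v⟩, col' (T.parent ↑v) ↑v)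
  have hvalid : ∀ {a b : {v : α // T.IsLeaf v}}, R.Adj a b → Cf a ≠ Cf b := by
    intro a b hab hCeq
    obtain ⟨z, x', y', hlca, hx, hy, hxa, hyb, hgadj⟩ := (hR a b).1 hab
    have hfst : dep T g ↑a = dep T g ↑b := by
      have := congrArg (fun p => (p.1 : ℕ)) hCeq
      simpa [Cf] using this
    have hsnd : col' (T.parent ↑a) ↑a = col' (T.parent ↑b) ↑b :=
      congrArg Prod.snd hCeq
    by_cases hxa' : x' = ↑a
    · by_cases hyb' : y' = ↑b
      · subst hxa'; subst hyb'
        refine hcol' z _ _ hx hy hgadj ?_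
        rw [hx.1, hy.1] at hsnd
        exact hsnd
      · subst hxa'
        exact absurd hfst (Nat.ne_of_lt (dep_lt_of b.2 hx hy hyb hyb' hgadj))
    · have hyb' : y' = ↑b := by
        rcases hind z x' y' hgadj with h | h
        · exact absurd (h.ancestor_eq hxa) hxa'
        · exact h.ancestor_eq hyb
      subst hyb'
      exact absurd hfst.symm
        (Nat.ne_of_lt (dep_lt_of a.2 hy hx hxa hxa' hgadj.symm))
  have hcolor : R.Colorable (Fintype.card (Fin W × Fin (W ^ k))) :=
    SimpleGraph.Coloring.colorable ⟨Cf, fun {a b} h => hvalid h⟩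
  have hcardeq : Fintype.card (Fin W × Fin (W ^ k)) = W ^ (k + 1) := by
    simp [Fintype.card_prod, pow_succ, Nat.mul_comm]
  rwa [hcardeq] at hcolor
end
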